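/- arXiv:1601.07865 — 13 statements merged into one kernel-verified Lean document; each statement's English description precedes it below -/
import Mathlib

section
/- Let N ≥ 1, τ, W, σ², R > 0, w_G, w_D > 0, p_G^max, p_H^max > 0, channel gains h_{G,i}, h_{H,i} > 0 and energy arrivals E_{H,i} ≥ 0 for i = 1,…,N, and let r(p,h) = τ·W·log₂(1 + h·σ^{−2}·p). Consider problem P1: minimize Σ_{n=1}^{N} (w_G·p_{G,n}·τ + w_D·I_{D,n}) over indicators I_{G,i}, I_{H,i}, I_{D,i} ∈ {0,1} with I_{G,i}+I_{H,i}+I_{D,i} = 1 and powers 0 ≤ p_{j,i} ≤ p_j^max (j ∈ {G,H}), subject to the energy causality constraints Σ_{l=1}^{i} p_{H,l}·τ ≤ Σ_{n=1}^{i} E_{H,n} for all i and the QoS constraints I_{G,i}·r(p_{G,i},h_{G,i}) + I_{H,i}·r(p_{H,i},h_{H,i}) ≥ (1 − I_{D,i})·R for all i. Define p_{H,i}^inv = (2^{R/(W·τ)} − 1)·σ²/h_{H,i}, p_{G,i}^inv = (2^{R/(W·τ)} − 1)·σ²/h_{G,i}, κ = min(p_G^max, w_D/(w_G·τ)), and c_i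 = w_G·p_{G,i}^inv·τ if p_{G,i}^inv ≤ κ and c_i = w_D otherwise. Then the infimum of the P1 objective over its feasible set equals the minimum over all α ∈ {0,1}^N satisfying Σ_{k=1}^{i} α_k·p_{H,k}^inv·τ ≤ Σ_{l=1}^{i} E_{H,l} for all i and α_i·p_{H,i}^inv ≤ p_H^max for all i, of Σ_{n=1}^{N} (1 − α_n)·c_n. -/
/-!
Whenever a packet is sent, sending it at the channel-inversion power `p^inv` (the least power
whose rate reaches `R`) is optimal: more power only costs more on the grid and wastes harvested
energy. So a feasible point of `P1` is dominated block by block by the point of `P̂1` with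
`α = I_H`: when the grid serves block `i`, its cost `w_G p_{G,i} τ` is at least
`w_G p_{G,i}^inv τ`, and `c_i` is the cheaper of that and deferral. Conversely every `α`
feasible for `P̂1` is realised in `P1` at cost exactly `∑ (1 - α_n) c_n`, and `P̂1` has finitely
many values, so the infimum of `P1` is attained and equals the minimum of `P̂1`.
-/

theorem isLeast_csInf_of_subset_of_forall_exists_le {α : Type*}
    [ConditionallyCompleteLinearOrder α] {A S : Set α} (hfin : A.Finite) (hne : A.Nonempty)
    (hsub : A ⊆ S) (hle : ∀ y ∈ S, ∃ a ∈ A, a ≤ y) : IsLeast A (sInf S) := by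
  have hA : IsLeast A (sInf A) := ⟨hne.csInf_mem hfin, fun _ ha => csInf_le hfin.bddBelow ha⟩
  have hS : IsLeast S (sInf A) := ⟨hsub hA.1, fun y hy =>
    let ⟨_, ha, hay⟩ := hle y hy
    (hA.2 ha).trans hay⟩
  rwa [hS.csInf_eq]

theorem le_mul_logb_one_add_iff {τ W σ2 R h p : ℝ} (hWτ : 0 < W * τ) (hσ : 0 < σ2)
    (hh : 0 < h) (hp : 0 ≤ p) :
    R ≤ τ * W * Real.logb 2 (1 + h * σ2⁻¹ * p) ↔ ((2 : ℝ) ^ (R / (W * τ)) - 1) * σ2 / h ≤ p := by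
  have hpos : 0 < 1 + h * σ2⁻¹ * p := by positivity
  calc R ≤ τ * W * Real.logb 2 (1 + h * σ2⁻¹ * p)
      ↔ R / (W * τ) ≤ Real.logb 2 (1 + h * σ2⁻¹ * p) := by
        rw [div_le_iff₀ hWτ, mul_comm τ W, mul_comm]
    _ ↔ (2 : ℝ) ^ (R / (W * τ)) ≤ 1 + h * σ2⁻¹ * p := Real.le_logb_iff_rpow_le one_lt_two hpos
    _ ↔ ((2 : ℝ) ^ (R / (W * τ)) - 1) * σ2 / h ≤ p := by
        rw [div_le_iff₀ hh, ← sub_le_iff_le_add', ← le_div_iff₀ hσ,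
          show p * h / σ2 = h * σ2⁻¹ * p by ring]

def IsOneHot (a b c : ℝ) : Prop :=
  (a = 1 ∧ b = 0 ∧ c = 0) ∨ (a = 0 ∧ b = 1 ∧ c = 0) ∨ (a = 0 ∧ b = 0 ∧ c = 1)

theorem isOneHot_of_add_add_eq_one {a b c : ℝ} (ha : a = 0 ∨ a = 1) (hb : b = 0 ∨ b = 1)
    (hc : c = 0 ∨ c = 1) (h : a + b + c = 1) : IsOneHot a b c := by
  revert h
  rcases ha with rfl | rfl <;> rcases hb with rfl | rfl <;> rcases hc with rfl | rfl <;>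
    norm_num [IsOneHot]

/-- The cost `c_i` of a block not served by the harvesting station, as a function of the grid
inversion power `x`: grid service at power `x` if that is allowed and cheaper than deferral. -/
noncomputable def serviceCost (τ wG wD pGmax x : ℝ) : ℝ :=
  if x ≤ min pGmax (wD / (wG * τ)) then wG * x * τ else wD

section serviceCost

variable {τ wG wD pGmax x : ℝ}

theorem serviceCost_le_deferral (hwGτ : 0 < wG * τ) : serviceCost τ wG wD pGmax x ≤ wD := by
  unfold serviceCost
  split_ifs with hx
  · have := (le_div_iff₀ hwGτ).1 (hx.trans (min_le_right _ _))
    linarith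
  · rfl

theorem serviceCost_le_grid {p : ℝ} (hwGτ : 0 < wG * τ) (hxp : x ≤ p) (hp : p ≤ pGmax) :
    serviceCost τ wG wD pGmax x ≤ wG * p * τ := by
  unfold serviceCost
  split_ifs with hx
  · nlinarith
  · have : wD / (wG * τ) < p := by
      by_contra! h
      exact hx (le_min (hxp.trans hp) (hxp.trans h))
    have := (div_lt_iff₀ hwGτ).1 this
    linarith

end serviceCost

section Block

variable {τ R wG wD pGmax IG IH ID pG pH rG rH pGinv pHinv : ℝ}

theorem mul_inversionPower_le (hI : IsOneHot IG IH ID) (hpH : 0 ≤ pH)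
    (hH : R ≤ rH → pHinv ≤ pH) (hQ : (1 - ID) * R ≤ IG * rG + IH * rH) : IH * pHinv ≤ pH := by
  rcases hI with ⟨rfl, rfl, rfl⟩ | ⟨rfl, rfl, rfl⟩ | ⟨rfl, rfl, rfl⟩
  · simpa using hpH
  · simpa using hH (by simpa using hQ)
  · simpa using hpH

theorem one_sub_mul_serviceCost_le (hwGτ : 0 < wG * τ) (hI : IsOneHot IG IH ID)
    (hpG : 0 ≤ pG) (hpGmax : pG ≤ pGmax) (hG : R ≤ rG → pGinv ≤ pG)
    (hQ : (1 - ID) * R ≤ IG * rG + IH * rH) :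
    (1 - IH) * serviceCost τ wG wD pGmax pGinv ≤ wG * pG * τ + wD * ID := by
  rcases hI with ⟨rfl, rfl, rfl⟩ | ⟨rfl, rfl, rfl⟩ | ⟨rfl, rfl, rfl⟩
  · simpa using serviceCost_le_grid hwGτ (hG (by simpa using hQ)) hpGmax
  · nlinarith
  · have : serviceCost τ wG wD pGmax pGinv ≤ wD := serviceCost_le_deferral hwGτ
    nlinarith

end Block

/-- Objective values of the feasible points of problem `P1`. -/
def p1Values {N : ℕ} (τ R wG wD pGmax pHmax : ℝ) (hG hH E : Fin N → ℝ) (r : ℝ → ℝ → ℝ) :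
    Set ℝ :=
  {y : ℝ | ∃ IG IH ID pG pH : Fin N → ℝ,
    (∀ i, (IG i = 0 ∨ IG i = 1) ∧ (IH i = 0 ∨ IH i = 1) ∧ (ID i = 0 ∨ ID i = 1)) ∧
    (∀ i, IG i + IH i + ID i = 1) ∧
    (∀ i, 0 ≤ pG i ∧ pG i ≤ pGmax) ∧
    (∀ i, 0 ≤ pH i ∧ pH i ≤ pHmax) ∧
    (∀ i : Fin N, (∑ l ∈ Finset.univ.filter (· ≤ i), pH l * τ)
          ≤ ∑ n ∈ Finset.univ.filter (· ≤ i), E n) ∧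
    (∀ i, (1 - ID i) * R ≤ IG i * r (pG i) (hG i) + IH i * r (pH i) (hH i)) ∧
    y = ∑ n, (wG * pG n * τ + wD * ID n)}

/-- Objective values of the feasible points of the zero-one program `P̂1`. -/
def p1HatValues {N : ℕ} (τ pHmax : ℝ) (E pHinv c : Fin N → ℝ) : Set ℝ :=
  {y : ℝ | ∃ α : Fin N → ℝ, (∀ i, α i = 0 ∨ α i = 1) ∧
    (∀ i : Fin N, (∑ k ∈ Finset.univ.filter (· ≤ i), α k * pHinv k * τ)
          ≤ ∑ l ∈ Finset.univ.filter (· ≤ i), E l) ∧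
    (∀ i, α i * pHinv i ≤ pHmax) ∧
    y = ∑ n, (1 - α n) * c n}

section Programs

variable {N : ℕ} {τ R wG wD pGmax pHmax : ℝ} {hG hH E pHinv pGinv c : Fin N → ℝ}
  {r : ℝ → ℝ → ℝ}

theorem p1HatValues_finite : (p1HatValues τ pHmax E pHinv c).Finite := by
  classical
  refine (Set.finite_range fun b : Fin N → Bool => ∑ n, (1 - if b n then (1 : ℝ) else 0) * c n)
    |>.subset ?_
  rintro y ⟨α, hα, -, -, rfl⟩
  refine ⟨fun n => decide (α n = 1), Finset.sum_congr rfl fun n _ => ?_⟩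
  rcases hα n with h | h <;> simp [h]

theorem p1HatValues_nonempty (hpHmax : 0 ≤ pHmax) (hE : ∀ i, 0 ≤ E i) :
    (p1HatValues τ pHmax E pHinv c).Nonempty :=
  ⟨_, 0, fun _ => Or.inl rfl,
    fun i => by simpa using Finset.sum_nonneg fun l _ => hE l,
    fun _ => by simpa using hpHmax, rfl⟩

theorem exists_mem_p1HatValues_le (hwG : 0 < wG) (hτ : 0 < τ)
    (hrG : ∀ i p, 0 ≤ p → R ≤ r p (hG i) → pGinv i ≤ p)
    (hrH : ∀ i p, 0 ≤ p → R ≤ r p (hH i) → pHinv i ≤ p) :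
    ∀ y ∈ p1Values τ R wG wD pGmax pHmax hG hH E r,
      ∃ a ∈ p1HatValues τ pHmax E pHinv (fun i => serviceCost τ wG wD pGmax (pGinv i)),
        a ≤ y := by
  rintro y ⟨IG, IH, ID, pG, pH, hI, hIsum, hpG, hpH, hEH, hQ, rfl⟩
  have hone i : IsOneHot (IG i) (IH i) (ID i) :=
    isOneHot_of_add_add_eq_one (hI i).1 (hI i).2.1 (hI i).2.2 (hIsum i)
  have hpHinv_le i : IH i * pHinv i ≤ pH i :=
    mul_inversionPower_le (hone i) (hpH i).1 (hrH i _ (hpH i).1) (hQ i)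
  refine ⟨_, ⟨IH, fun i => (hI i).2.1, fun i => ?_, fun i => (hpHinv_le i).trans (hpH i).2, rfl⟩,
    Finset.sum_le_sum fun i _ => one_sub_mul_serviceCost_le (mul_pos hwG hτ) (hone i)
      (hpG i).1 (hpG i).2 (hrG i _ (hpG i).1) (hQ i)⟩
  exact (Finset.sum_le_sum fun k _ => mul_le_mul_of_nonneg_right (hpHinv_le k) hτ.le).trans
    (hEH i)

theorem p1HatValues_subset_p1Values (hpGmax : 0 ≤ pGmax) (hpGinv : ∀ i, 0 ≤ pGinv i)
    (hpHinv : ∀ i, 0 ≤ pHinv i) (hrG : ∀ i, R ≤ r (pGinv i) (hG i))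
    (hrH : ∀ i, R ≤ r (pHinv i) (hH i)) :
    p1HatValues τ pHmax E pHinv (fun i => serviceCost τ wG wD pGmax (pGinv i)) ⊆
      p1Values τ R wG wD pGmax pHmax hG hH E r := by
  classical
  rintro y ⟨α, hα, hαE, hαH, rfl⟩
  -- block `i` goes to the harvesting station if `α i = 1`, otherwise as `serviceCost` chooses,
  -- always at the inversion power
  let κ := min pGmax (wD / (wG * τ))
  let grid i : ℝ := if pGinv i ≤ κ then 1 else 0
  refine ⟨fun i => (1 - α i) * grid i, α, fun i => (1 - α i) * (1 - grid i),
    fun i => (1 - α i) * grid i * pGinv i, fun i => α i * pHinv i, fun i => ?_, fun i => ?_,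
    fun i => ?_, fun i => ⟨?_, hαH i⟩, hαE, fun i => ?_, ?_⟩
  · rcases hα i with h | h <;> by_cases hg : pGinv i ≤ κ <;> simp [grid, h, hg]
  · ring
  · rcases hα i with h | h <;> by_cases hg : pGinv i ≤ κ <;> simp [grid, h, hg, hpGmax]
    exact ⟨hpGinv i, hg.trans (min_le_left _ _)⟩
  · rcases hα i with h | h <;> simp [h, hpHinv i]
  · rcases hα i with h | h <;> by_cases hg : pGinv i ≤ κ <;> simp [grid, h, hg, hrG i, hrH i]
  · refine Finset.sum_congr rfl fun i _ => ?_
    rcases hα i with h | h <;> by_cases hg : pGinv i ≤ κ <;>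
      simp only [serviceCost, grid, κ, h, hg, ↓reduceIte] <;> ring

end Programs

theorem stmt1_general (N : ℕ) (τ W σ2 R wG wD pGmax pHmax : ℝ)
    (hτ : 0 < τ) (hW : 0 < W) (hσ : 0 < σ2) (hR : 0 < R)
    (hwG : 0 < wG) (hpGmax : 0 < pGmax) (hpHmax : 0 < pHmax)
    (hG hH E : Fin N → ℝ) (hhG : ∀ i, 0 < hG i) (hhH : ∀ i, 0 < hH i)
    (hE : ∀ i, 0 ≤ E i)
    (r : ℝ → ℝ → ℝ)
    (hr : ∀ p h, r p h = τ * W * Real.logb 2 (1 + h * σ2⁻¹ * p))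
    (pHinv pGinv c : Fin N → ℝ) (κ : ℝ)
    (hκ : κ = min pGmax (wD / (wG * τ)))
    (hpHinv : ∀ i, pHinv i = ((2 : ℝ) ^ (R / (W * τ)) - 1) * σ2 / hH i)
    (hpGinv : ∀ i, pGinv i = ((2 : ℝ) ^ (R / (W * τ)) - 1) * σ2 / hG i)
    (hc : ∀ i, c i = if pGinv i ≤ κ then wG * pGinv i * τ else wD) :
    IsLeast
      {y : ℝ | ∃ α : Fin N → ℝ, (∀ i, α i = 0 ∨ α i = 1) ∧
        (∀ i : Fin N, (∑ k ∈ Finset.univ.filter (· ≤ i), α k * pHinv k * τ)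
              ≤ ∑ l ∈ Finset.univ.filter (· ≤ i), E l) ∧
        (∀ i, α i * pHinv i ≤ pHmax) ∧
        y = ∑ n, (1 - α n) * c n}
      (sInf {y : ℝ | ∃ IG IH ID pG pH : Fin N → ℝ,
        (∀ i, (IG i = 0 ∨ IG i = 1) ∧ (IH i = 0 ∨ IH i = 1) ∧ (ID i = 0 ∨ ID i = 1)) ∧
        (∀ i, IG i + IH i + ID i = 1) ∧
        (∀ i, 0 ≤ pG i ∧ pG i ≤ pGmax) ∧
        (∀ i, 0 ≤ pH i ∧ pH i ≤ pHmax) ∧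
        (∀ i : Fin N, (∑ l ∈ Finset.univ.filter (· ≤ i), pH l * τ)
              ≤ ∑ n ∈ Finset.univ.filter (· ≤ i), E n) ∧
        (∀ i, (1 - ID i) * R ≤ IG i * r (pG i) (hG i) + IH i * r (pH i) (hH i)) ∧
        y = ∑ n, (wG * pG n * τ + wD * ID n)}) := by
  have hWτ : 0 < W * τ := mul_pos hW hτ
  have hinv_pos {h : ℝ} (hh : 0 < h) : 0 < ((2 : ℝ) ^ (R / (W * τ)) - 1) * σ2 / h := by
    have : 1 < (2 : ℝ) ^ (R / (W * τ)) := Real.one_lt_rpow one_lt_two (div_pos hR hWτ)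
    exact div_pos (mul_pos (sub_pos.2 this) hσ) hh
  have hrate {h p : ℝ} (hh : 0 < h) (hp : 0 ≤ p) :
      R ≤ r p h ↔ ((2 : ℝ) ^ (R / (W * τ)) - 1) * σ2 / h ≤ p := by
    rw [hr]; exact le_mul_logb_one_add_iff hWτ hσ hh hp
  have hrG i p (hp : 0 ≤ p) : R ≤ r p (hG i) ↔ pGinv i ≤ p := by
    rw [hpGinv]; exact hrate (hhG i) hp
  have hrH i p (hp : 0 ≤ p) : R ≤ r p (hH i) ↔ pHinv i ≤ p := by
    rw [hpHinv]; exact hrate (hhH i) hp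
  have hpGinv_pos i : 0 < pGinv i := by rw [hpGinv]; exact hinv_pos (hhG i)
  have hpHinv_pos i : 0 < pHinv i := by rw [hpHinv]; exact hinv_pos (hhH i)
  obtain rfl : c = fun i => serviceCost τ wG wD pGmax (pGinv i) := funext fun i => by
    rw [hc, hκ, serviceCost]
  exact isLeast_csInf_of_subset_of_forall_exists_le p1HatValues_finite
    (p1HatValues_nonempty hpHmax.le hE)
    (p1HatValues_subset_p1Values hpGmax.le (fun i => (hpGinv_pos i).le)
      (fun i => (hpHinv_pos i).le) (fun i => (hrG i _ (hpGinv_pos i).le).2 le_rfl)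
      (fun i => (hrH i _ (hpHinv_pos i).le).2 le_rfl))
    (exists_mem_p1HatValues_le hwG hτ (fun i p hp => (hrG i p hp).1)
      (fun i p hp => (hrH i p hp).1))

/-- Lemma 1 of the paper: the infimum of the off-line total-service-cost problem `P1`
(over BS assignment indicators and transmit powers) equals the minimum of the equivalent
zero-one integer program `P̂1` over the binary vector `α`.  Stated as: `sInf` of the set of
`P1` objective values is the least element (`IsLeast`) of the set of `P̂1` objective values. -/
theorem stmt1 (N : ℕ) (hN : 1 ≤ N) (τ W σ2 R wG wD pGmax pHmax : ℝ)
    (hτ : 0 < τ) (hW : 0 < W) (hσ : 0 < σ2) (hR : 0 < R)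
    (hwG : 0 < wG) (hwD : 0 < wD) (hpGmax : 0 < pGmax) (hpHmax : 0 < pHmax)
    (hG hH E : Fin N → ℝ) (hhG : ∀ i, 0 < hG i) (hhH : ∀ i, 0 < hH i)
    (hE : ∀ i, 0 ≤ E i)
    (r : ℝ → ℝ → ℝ)
    (hr : ∀ p h, r p h = τ * W * Real.logb 2 (1 + h * σ2⁻¹ * p))
    (pHinv pGinv c : Fin N → ℝ) (κ : ℝ)
    (hκ : κ = min pGmax (wD / (wG * τ)))
    (hpHinv : ∀ i, pHinv i = ((2 : ℝ) ^ (R / (W * τ)) - 1) * σ2 / hH i)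
    (hpGinv : ∀ i, pGinv i = ((2 : ℝ) ^ (R / (W * τ)) - 1) * σ2 / hG i)
    (hc : ∀ i, c i = if pGinv i ≤ κ then wG * pGinv i * τ else wD) :
    IsLeast
      {y : ℝ | ∃ α : Fin N → ℝ, (∀ i, α i = 0 ∨ α i = 1) ∧
        (∀ i : Fin N, (∑ k ∈ Finset.univ.filter (· ≤ i), α k * pHinv k * τ)
              ≤ ∑ l ∈ Finset.univ.filter (· ≤ i), E l) ∧
        (∀ i, α i * pHinv i ≤ pHmax) ∧
        y = ∑ n, (1 - α n) * c n}
      (sInf {y : ℝ | ∃ IG IH ID pG pH : Fin N → ℝ,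
        (∀ i, (IG i = 0 ∨ IG i = 1) ∧ (IH i = 0 ∨ IH i = 1) ∧ (ID i = 0 ∨ ID i = 1)) ∧
        (∀ i, IG i + IH i + ID i = 1) ∧
        (∀ i, 0 ≤ pG i ∧ pG i ≤ pGmax) ∧
        (∀ i, 0 ≤ pH i ∧ pH i ≤ pHmax) ∧
        (∀ i : Fin N, (∑ l ∈ Finset.univ.filter (· ≤ i), pH l * τ)
              ≤ ∑ n ∈ Finset.univ.filter (· ≤ i), E n) ∧
        (∀ i, (1 - ID i) * R ≤ IG i * r (pG i) (hG i) + IH i * r (pH i) (hH i)) ∧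
        y = ∑ n, (wG * pG n * τ + wD * ID n)}) :=
  stmt1_general N τ W σ2 R wG wD pGmax pHmax hτ hW hσ hR hwG hpGmax hpHmax hG hH E hhG hhH hE r hr
    pHinv pGinv c κ hκ hpHinv hpGinv hc
end

section
/- If α ∈ {0,1}^N is optimal for the off-line problem P̂1, then there exist no indices i < j (with i, j ∈ {1,…,N}) such that α_i = 1, α_j = 0, c_i < c_j, and p_i ≥ p_j. -/
/-- Proposition 1 of the paper: if `α ∈ {0,1}^N` is optimal for the off-line problem `P̂1`,
then there are no indices `i < j` with `α i = 1`, `α j = 0`, `c i < c j` and `p i ≥ p j`. -/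
theorem stmt2 (N : ℕ) (hN : 1 ≤ N) (τ pmax : ℝ) (hτ : 0 < τ) (hpmax : 0 < pmax)
    (c p E : Fin N → ℝ) (hc : ∀ i, 0 ≤ c i) (hp : ∀ i, 0 ≤ p i) (hE : ∀ i, 0 ≤ E i)
    (Feasible : (Fin N → ℝ) → Prop)
    (hFeas : ∀ β, Feasible β ↔ ((∀ i, β i = 0 ∨ β i = 1) ∧
        (∀ i : Fin N, (∑ k ∈ Finset.univ.filter (· ≤ i), β k * p k * τ)
              ≤ ∑ l ∈ Finset.univ.filter (· ≤ i), E l) ∧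
        (∀ i, β i * p i ≤ pmax)))
    (α : Fin N → ℝ) (hfeas : Feasible α)
    (hopt : ∀ β, Feasible β → ∑ n, (1 - α n) * c n ≤ ∑ n, (1 - β n) * c n) :
    ¬ ∃ i j : Fin N, i < j ∧ α i = 1 ∧ α j = 0 ∧ c i < c j ∧ p j ≤ p i := by
  rintro ⟨i, j, hij, hai, haj, hcij, hpji⟩
  have hne : i ≠ j := ne_of_lt hij
  set β : Fin N → ℝ := Function.update (Function.update α i 0) j 1 with hβdef
  have hβi : β i = 0 := by simp [hβdef, Function.update, hne]
  have hβj : β j = 1 := by simp [hβdef]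
  have hβk : ∀ k, k ≠ i → k ≠ j → β k = α k := by
    intro k h1 h2; simp [hβdef, Function.update, h1, h2]
  rw [hFeas] at hfeas
  obtain ⟨hbin, hcaus, hpeak⟩ := hfeas
  have hβfeas : Feasible β := by
    rw [hFeas]
    refine ⟨?_, ?_, ?_⟩
    · intro k
      by_cases h1 : k = j
      · subst h1; right; exact hβj
      by_cases h2 : k = i
      · subst h2; left; exact hβi
      · rw [hβk k h2 h1]; exact hbin k
    · intro m
      refine le_trans ?_ (hcaus m)
      set S := Finset.univ.filter (· ≤ m) with hS
      by_cases hiS : i ≤ m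
      · by_cases hjS : j ≤ m
        · have hsub : ({i, j} : Finset (Fin N)) ⊆ S := by
            intro x hx
            simp only [Finset.mem_insert, Finset.mem_singleton] at hx
            rcases hx with rfl | rfl <;> simp [hS, hiS, hjS]
          have key : ∑ k ∈ S, (β k * p k * τ - α k * p k * τ)
              = ∑ k ∈ ({i, j} : Finset (Fin N)), (β k * p k * τ - α k * p k * τ) := by
            refine (Finset.sum_subset hsub fun x _ hx => ?_).symm
            simp only [Finset.mem_insert, Finset.mem_singleton, not_or] at hx
            rw [hβk x hx.1 hx.2]; ring
          rw [Finset.sum_pair hne, hβi, hβj, hai, haj] at key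
          have h0 : ∑ k ∈ S, β k * p k * τ - ∑ k ∈ S, α k * p k * τ ≤ 0 := by
            rw [← Finset.sum_sub_distrib, key]
            nlinarith [hp i, hp j]
          linarith
        · apply Finset.sum_le_sum
          intro k hk
          by_cases h2 : k = i
          · rw [h2, hβi, hai]; nlinarith [hp i]
          · have h1 : k ≠ j := by
              rintro rfl
              exact hjS (by simpa [hS] using hk)
            rw [hβk k h2 h1]
      · have hjS : ¬ j ≤ m := fun h => hiS (le_trans hij.le h)
        apply Finset.sum_le_sum
        intro k hk
        have hkm : k ≤ m := by simpa [hS] using hk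
        have h2 : k ≠ i := by rintro rfl; exact hiS hkm
        have h1 : k ≠ j := by rintro rfl; exact hjS hkm
        rw [hβk k h2 h1]
    · intro k
      by_cases h1 : k = j
      · rw [h1, hβj, one_mul]
        calc p j ≤ p i := hpji
          _ = α i * p i := by rw [hai, one_mul]
          _ ≤ pmax := hpeak i
      by_cases h2 : k = i
      · subst h2; rw [hβi]; simpa using hpmax.le
      · rw [hβk k h2 h1]; exact hpeak k
  have hle := hopt β hβfeas
  have key : ∑ n, ((1 - β n) * c n - (1 - α n) * c n)
      = ∑ n ∈ ({i, j} : Finset (Fin N)), ((1 - β n) * c n - (1 - α n) * c n) := by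
    refine (Finset.sum_subset (Finset.subset_univ _) fun x _ hx => ?_).symm
    simp only [Finset.mem_insert, Finset.mem_singleton, not_or] at hx
    rw [hβk x hx.1 hx.2]; ring
  rw [Finset.sum_pair hne, hβi, hβj, hai, haj] at key
  have hsum : (∑ n, (1 - β n) * c n) - ∑ n, (1 - α n) * c n = c i - c j := by
    rw [← Finset.sum_sub_distrib, key]; ring
  linarith
end

section
/- Suppose α ∈ {0,1}^N is feasible for the off-line problem P̂1 and there are indices i < j with α_i = 1, α_j = 0 and p_i ≥ p_j. Define α' by α'_i = 0, α'_j = 1 and α'_k = α_k for k ∉ {i,j}. Then α' is feasible, and the total service cost of α' equals the total service cost of α minus (c_j − c_i). -/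
/-- The exchange argument at the core of Proposition 1 of the paper: if `α` is feasible for
`P̂1`, `i < j`, `α i = 1`, `α j = 0` and `p i ≥ p j`, then the swapped vector `α'`
(with `α' i = 0`, `α' j = 1`, unchanged elsewhere) is feasible, and its total service cost
equals that of `α` minus `(c j - c i)`. -/
theorem stmt3 (N : ℕ) (hN : 1 ≤ N) (τ pmax : ℝ) (hτ : 0 < τ) (hpmax : 0 < pmax)
    (c p E : Fin N → ℝ) (hc : ∀ i, 0 ≤ c i) (hp : ∀ i, 0 ≤ p i) (hE : ∀ i, 0 ≤ E i)
    (α : Fin N → ℝ) (hα : ∀ i, α i = 0 ∨ α i = 1)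
    (hcaus : ∀ i : Fin N, (∑ k ∈ Finset.univ.filter (· ≤ i), α k * p k * τ)
              ≤ ∑ l ∈ Finset.univ.filter (· ≤ i), E l)
    (hpeak : ∀ i, α i * p i ≤ pmax)
    (i j : Fin N) (hij : i < j) (hi : α i = 1) (hj : α j = 0) (hpij : p j ≤ p i)
    (α' : Fin N → ℝ)
    (hα' : ∀ k, α' k = if k = i then 0 else if k = j then 1 else α k) :
    ((∀ i' : Fin N, (∑ k ∈ Finset.univ.filter (· ≤ i'), α' k * p k * τ)
              ≤ ∑ l ∈ Finset.univ.filter (· ≤ i'), E l) ∧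
      (∀ i', α' i' * p i' ≤ pmax)) ∧
    (∑ n, (1 - α' n) * c n) = (∑ n, (1 - α n) * c n) - (c j - c i) := by
  have hne : i ≠ j := ne_of_lt hij
  have hαi : α' i = 0 := by rw [hα' i]; simp
  have hαj : α' j = 1 := by rw [hα' j]; simp [Ne.symm hne]
  have hαk : ∀ k, k ≠ i → k ≠ j → α' k = α k := by
    intro k h1 h2; rw [hα' k]; simp [h1, h2]
  have key : ∀ (S : Finset (Fin N)) (g : Fin N → ℝ), (∀ k, k ≠ i → k ≠ j → g k = 0) →
      ∑ k ∈ S, g k = (if i ∈ S then g i else 0) + (if j ∈ S then g j else 0) := by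
    intro S g hg
    rw [show (∑ k ∈ S, g k)
        = ∑ k ∈ S, ((if k = i then g i else 0) + (if k = j then g j else 0)) from
        Finset.sum_congr rfl ?_, Finset.sum_add_distrib, Finset.sum_ite_eq',
        Finset.sum_ite_eq']
    intro k _
    by_cases h1 : k = i
    · subst h1; simp [hne]
    · by_cases h2 : k = j
      · subst h2; simp [Ne.symm hne]
      · simp [h1, h2, hg k h1 h2]
  refine ⟨⟨?_, ?_⟩, ?_⟩
  · intro i'
    set S := Finset.univ.filter (· ≤ i') with hS
    have hmem : ∀ k : Fin N, k ∈ S ↔ k ≤ i' := by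
      intro k; simp [hS]
    have hdiff : ∑ k ∈ S, α' k * p k * τ - ∑ k ∈ S, α k * p k * τ
        = (if i ∈ S then -(p i * τ) else 0) + (if j ∈ S then p j * τ else 0) := by
      rw [← Finset.sum_sub_distrib]
      rw [key S (fun k => α' k * p k * τ - α k * p k * τ)
        (by intro k h1 h2; simp [hαk k h1 h2])]
      simp [hαi, hαj, hi, hj]
    have hle : ∑ k ∈ S, α' k * p k * τ ≤ ∑ k ∈ S, α k * p k * τ := by
      have hiτ : 0 ≤ p i * τ := mul_nonneg (hp i) hτ.le
      by_cases hjS : j ∈ S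
      · have hiS : i ∈ S := (hmem i).2 (le_of_lt (lt_of_lt_of_le hij ((hmem j).1 hjS)))
        have : ∑ k ∈ S, α' k * p k * τ - ∑ k ∈ S, α k * p k * τ
            = p j * τ - p i * τ := by rw [hdiff]; simp [hiS, hjS]; ring
        nlinarith [mul_le_mul_of_nonneg_right hpij hτ.le]
      · by_cases hiS : i ∈ S
        · have : ∑ k ∈ S, α' k * p k * τ - ∑ k ∈ S, α k * p k * τ = -(p i * τ) := by
            rw [hdiff]; simp [hiS, hjS]
          linarith
        · have : ∑ k ∈ S, α' k * p k * τ - ∑ k ∈ S, α k * p k * τ = 0 := by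
            rw [hdiff]; simp [hiS, hjS]
          linarith
    exact hle.trans (hcaus i')
  · intro i'
    by_cases h1 : i' = i
    · subst h1; rw [hαi]; simpa using hpmax.le
    · by_cases h2 : i' = j
      · subst h2; rw [hαj, one_mul]
        have := hpeak i; rw [hi, one_mul] at this
        linarith
      · rw [hαk i' h1 h2]; exact hpeak i'
  · have hdiff : ∑ n, (1 - α' n) * c n - ∑ n, (1 - α n) * c n = c i - c j := by
      rw [← Finset.sum_sub_distrib]
      rw [key Finset.univ (fun n => (1 - α' n) * c n - (1 - α n) * c n)
        (by intro k h1 h2; simp [hαk k h1 h2])]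
      simp [hαi, hαj, hi, hj]
      ring
    linarith
end

section
/- Suppose the H-channel inversion powers are constant, i.e., p_1 = ⋯ = p_N = p for some p ≥ 0. Consider any run of the greedy procedure: starting from α = 0, repeatedly choose a block i with α_i = 0 such that setting α_i = 1 preserves feasibility and such that c_i is maximal among all such blocks, set α_i = 1, and terminate when no block can be feasibly selected. Then the vector α produced by the greedy procedure attains the minimum total service cost Σ_{n=1}^{N} (1−α_n)·c_n over all feasible vectors. -/
lemma exists_gap {N : ℕ} (A B : Finset (Fin N)) (h : A.card < B.card) :
    ∃ x ∈ B, x ∉ A ∧ ∀ i, x ≤ i →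
      (A.filter (· ≤ i)).card < (B.filter (· ≤ i)).card := by
  classical
  set D := Finset.univ.filter
      (fun i : Fin N => (B.filter (· ≤ i)).card ≤ (A.filter (· ≤ i)).card) with hD
  have key : ∀ i, i ∉ D → (A.filter (· ≤ i)).card < (B.filter (· ≤ i)).card := by
    intro i hi
    have : ¬ ((B.filter (· ≤ i)).card ≤ (A.filter (· ≤ i)).card) := by
      intro hle; exact hi (by simp [hD, hle])
    omega
  by_cases hDne : D.Nonempty
  · set m := D.max' hDne with hm
    have hmD : m ∈ D := D.max'_mem hDne
    have hmle : (B.filter (· ≤ m)).card ≤ (A.filter (· ≤ m)).card := by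
      simpa [hD] using hmD
    have hsplitA : (A.filter (· ≤ m)).card + (A.filter (fun k => m < k)).card = A.card := by
      simpa [not_le] using Finset.card_filter_add_card_filter_not
        (s := A) (p := (· ≤ m))
    have hsplitB : (B.filter (· ≤ m)).card + (B.filter (fun k => m < k)).card = B.card := by
      simpa [not_le] using Finset.card_filter_add_card_filter_not
        (s := B) (p := (· ≤ m))
    have hgt : (A.filter (fun k => m < k)).card
        < (B.filter (fun k => m < k)).card := by omega
    obtain ⟨x, hxB, hxA⟩ : ∃ x ∈ B.filter (fun k => m < k),
        x ∉ A.filter (fun k => m < k) := by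
      by_contra hcon
      push_neg at hcon
      exact absurd (Finset.card_le_card hcon) (by omega)
    simp only [Finset.mem_filter] at hxB
    refine ⟨x, hxB.1, ?_, ?_⟩
    · intro hxA'
      exact hxA (Finset.mem_filter.mpr ⟨hxA', hxB.2⟩)
    · intro i hxi
      apply key
      intro hiD
      exact absurd (le_trans hxi (D.le_max' i hiD)) (not_le.mpr hxB.2)
  · have hBA : ∃ x ∈ B, x ∉ A := by
      by_contra hcon
      push_neg at hcon
      exact absurd (Finset.card_le_card hcon) (by omega)
    obtain ⟨x, hxB, hxA⟩ := hBA
    refine ⟨x, hxB, hxA, fun i _ => key i ?_⟩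
    simp [Finset.not_nonempty_iff_eq_empty.mp hDne]



/-- Property 3 of the Greedy Assignment algorithm (Appendix B): when the H-channel inversion
powers are constant (`p i = pc` for all `i`), any run of the greedy procedure — repeatedly
selecting a not-yet-selected block whose addition preserves feasibility and whose cost `c i`
is maximal among such blocks, until no block can be feasibly added — produces a feasible set
attaining the minimum total service cost `∑ₙ (1 - αₙ)·cₙ` over all feasible vectors.
The run is recorded as a duplicate-free list `L` of the selected blocks in order of selection. -/
theorem stmt4 (N : ℕ) (hN : 1 ≤ N) (τ pmax pc : ℝ) (hτ : 0 < τ) (hpmax : 0 < pmax)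
    (hpc : 0 ≤ pc)
    (c p E : Fin N → ℝ) (hc : ∀ i, 0 ≤ c i) (hp : ∀ i, p i = pc) (hE : ∀ i, 0 ≤ E i)
    (Feasible : Finset (Fin N) → Prop)
    (hFeas : ∀ S, Feasible S ↔
      ((∀ i : Fin N, (∑ k ∈ S.filter (· ≤ i), p k * τ)
            ≤ ∑ l ∈ Finset.univ.filter (· ≤ i), E l) ∧
       (∀ i ∈ S, p i ≤ pmax)))
    (L : List (Fin N)) (hnd : L.Nodup)
    (hfeasPrefix : ∀ t, t ≤ L.length → Feasible (L.take t).toFinset)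
    (hgreedy : ∀ t, ∀ ht : t < L.length, ∀ j, j ∉ (L.take t).toFinset →
        Feasible (insert j (L.take t).toFinset) → c j ≤ c (L.get ⟨t, ht⟩))
    (hterm : ∀ j, j ∉ L.toFinset → ¬ Feasible (insert j L.toFinset)) :
    ∀ S : Finset (Fin N), Feasible S →
      (∑ n, (1 - (if n ∈ L.toFinset then (1 : ℝ) else 0)) * c n)
        ≤ ∑ n, (1 - (if n ∈ S then (1 : ℝ) else 0)) * c n := by
  classical
  intro S hS
  set q := pc * τ with hqdef
  have hq0 : 0 ≤ q := mul_nonneg hpc hτ.le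
  have hsum : ∀ T : Finset (Fin N), ∀ i : Fin N,
      (∑ k ∈ T.filter (· ≤ i), p k * τ) = ((T.filter (· ≤ i)).card : ℝ) * q := by
    intro T i
    rw [Finset.sum_congr rfl (fun k _ => by rw [hp k]), Finset.sum_const,
      nsmul_eq_mul]
  have hfeas' : ∀ T : Finset (Fin N), Feasible T ↔
      ((∀ i : Fin N, ((T.filter (· ≤ i)).card : ℝ) * q
          ≤ ∑ l ∈ Finset.univ.filter (· ≤ i), E l)
        ∧ ∀ i ∈ T, p i ≤ pmax) := by
    intro T
    rw [hFeas]
    simp only [hsum]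
  have hsub : ∀ T T' : Finset (Fin N), T ⊆ T' → Feasible T' → Feasible T := by
    intro T T' hTT hT'
    rw [hfeas'] at hT' ⊢
    refine ⟨fun i => le_trans ?_ (hT'.1 i), fun i hi => hT'.2 i (hTT hi)⟩
    have := Finset.card_le_card (Finset.filter_subset_filter (· ≤ i) hTT)
    exact mul_le_mul_of_nonneg_right (by exact_mod_cast this) hq0
  have hexch : ∀ A B : Finset (Fin N), Feasible A → Feasible B → A.card < B.card →
      ∃ x ∈ B, x ∉ A ∧ Feasible (insert x A) := by
    intro A B hA hB hcard
    obtain ⟨x, hxB, hxA, hx⟩ := exists_gap A B hcard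
    refine ⟨x, hxB, hxA, ?_⟩
    rw [hfeas'] at hA hB ⊢
    constructor
    · intro i
      by_cases hxi : x ≤ i
      · have hfil : (insert x A).filter (· ≤ i) = insert x (A.filter (· ≤ i)) := by
          rw [Finset.filter_insert, if_pos hxi]
        rw [hfil, Finset.card_insert_of_notMem
          (fun hmem => hxA (Finset.mem_filter.mp hmem).1)]
        calc (((A.filter (· ≤ i)).card + 1 : ℕ) : ℝ) * q
            ≤ ((B.filter (· ≤ i)).card : ℝ) * q := by
              exact mul_le_mul_of_nonneg_right (by exact_mod_cast hx i hxi) hq0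
          _ ≤ _ := hB.1 i
      · rw [Finset.filter_insert, if_neg hxi]
        exact hA.1 i
    · intro j hj
      rcases Finset.mem_insert.mp hj with rfl | hjA
      · exact hB.2 j hxB
      · exact hA.2 j hjA
  have hLtf : L.toFinset.card = L.length := List.toFinset_card_of_nodup hnd
  have hcardle : ∀ T, Feasible T → T.card ≤ L.length := by
    intro T hT
    by_contra hcon
    push_neg at hcon
    have hLfeas : Feasible L.toFinset := by
      have := hfeasPrefix L.length le_rfl
      rwa [List.take_length] at this
    obtain ⟨x, hxT, hxL, hfx⟩ := hexch L.toFinset T hLfeas hT (by omega)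
    exact hterm x hxL hfx
  have main : ∀ n : ℕ, ∀ T : Finset (Fin N), Feasible T → T.card = n →
      (∑ x ∈ T, c x) ≤ ((L.take n).map c).sum := by
    intro n
    induction n with
    | zero =>
      intro T _ hT0
      rw [Finset.card_eq_zero.mp hT0]
      simp
    | succ n ih =>
      intro T hT hTc
      have hTne : T.Nonempty := by rw [← Finset.card_pos, hTc]; omega
      obtain ⟨x, hxT, hxmin⟩ := Finset.exists_min_image T c hTne
      have hT' : Feasible (T.erase x) := hsub _ T (Finset.erase_subset _ _) hT
      have hTc' : (T.erase x).card = n := by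
        rw [Finset.card_erase_of_mem hxT, hTc]
        omega
      have hsum' := ih (T.erase x) hT' hTc'
      have hnlt : n < L.length := by have := hcardle T hT; omega
      have hGn : Feasible (L.take n).toFinset := hfeasPrefix n (le_of_lt hnlt)
      have hGcard : (L.take n).toFinset.card = n := by
        rw [List.toFinset_card_of_nodup ((L.take_sublist n).nodup hnd),
          List.length_take]
        omega
      obtain ⟨y, hyT, hyG, hyf⟩ := hexch _ T hGn hT (by omega)
      have hcx : c x ≤ c (L.get ⟨n, hnlt⟩) :=
        le_trans (hxmin y hyT) (hgreedy n hnlt y hyG hyf)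
      have hsplit : ((L.take (n+1)).map c).sum
          = ((L.take n).map c).sum + c (L.get ⟨n, hnlt⟩) := by
        rw [List.map_take, List.map_take,
          List.sum_take_succ (L.map c) n (by simpa using hnlt)]
        simp [List.getElem_map]
      rw [hsplit, ← Finset.add_sum_erase T c hxT]
      linarith
  have hfinal : (∑ x ∈ S, c x) ≤ ∑ x ∈ L.toFinset, c x := by
    calc (∑ x ∈ S, c x) ≤ ((L.take S.card).map c).sum := main S.card S hS rfl
      _ ≤ (L.map c).sum := by
          conv_rhs => rw [← List.take_append_drop S.card L]
          rw [List.map_append, List.sum_append]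
          have h0 : 0 ≤ ((L.drop S.card).map c).sum :=
            List.sum_nonneg (fun x hx => by
              obtain ⟨y, _, rfl⟩ := List.mem_map.mp hx; exact hc y)
          linarith
      _ = ∑ x ∈ L.toFinset, c x := by
          rw [List.sum_toFinset c hnd]
  have transform : ∀ T : Finset (Fin N),
      (∑ n, (1 - (if n ∈ T then (1 : ℝ) else 0)) * c n)
        = (∑ n, c n) - ∑ x ∈ T, c x := by
    intro T
    simp only [sub_mul, one_mul, ite_mul, zero_mul, Finset.sum_sub_distrib,
      Finset.sum_ite_mem, Finset.univ_inter]
  rw [transform, transform]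
  linarith
end

section
/- Suppose the per-block costs are constant, i.e., c_1 = ⋯ = c_N = c for some c > 0. Consider any run of the greedy procedure: starting from α = 0, repeatedly choose a block i with α_i = 0 such that setting α_i = 1 preserves feasibility and such that p_i is minimal among all such blocks, set α_i = 1, and terminate when no block can be feasibly selected. Then the vector α produced by the greedy procedure attains the minimum total service cost Σ_{n=1}^{N} (1−α_n)·c_n over all feasible vectors; equivalently, it maximizes the number of selected blocks Σ_{n=1}^{N} α_n over all feasible vectors. -/
/-- Second case of Property 3 of the Greedy Assignment algorithm: when the per-block costs
are constant (`c i = cc > 0` for all `i`), any run of the greedy procedure — repeatedly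
selecting a not-yet-selected block whose addition preserves feasibility and whose inversion
power `p i` is minimal among such blocks, until no block can be feasibly added — produces a
feasible set attaining the minimum total service cost over all feasible vectors;
equivalently, it maximizes the number of selected blocks. -/
theorem stmt5 (N : ℕ) (hN : 1 ≤ N) (τ pmax cc : ℝ) (hτ : 0 < τ) (hpmax : 0 < pmax)
    (hcc : 0 < cc)
    (c p E : Fin N → ℝ) (hc : ∀ i, c i = cc) (hp : ∀ i, 0 ≤ p i) (hE : ∀ i, 0 ≤ E i)
    (Feasible : Finset (Fin N) → Prop)
    (hFeas : ∀ S, Feasible S ↔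
      ((∀ i : Fin N, (∑ k ∈ S.filter (· ≤ i), p k * τ)
            ≤ ∑ l ∈ Finset.univ.filter (· ≤ i), E l) ∧
       (∀ i ∈ S, p i ≤ pmax)))
    (L : List (Fin N)) (hnd : L.Nodup)
    (hfeasPrefix : ∀ t, t ≤ L.length → Feasible (L.take t).toFinset)
    (hgreedy : ∀ t, ∀ ht : t < L.length, ∀ j, j ∉ (L.take t).toFinset →
        Feasible (insert j (L.take t).toFinset) → p (L.get ⟨t, ht⟩) ≤ p j)
    (hterm : ∀ j, j ∉ L.toFinset → ¬ Feasible (insert j L.toFinset)) :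
    ∀ S : Finset (Fin N), Feasible S →
      ((∑ n, (1 - (if n ∈ L.toFinset then (1 : ℝ) else 0)) * c n)
          ≤ ∑ n, (1 - (if n ∈ S then (1 : ℝ) else 0)) * c n) ∧
      S.card ≤ L.toFinset.card := by
  classical
  -- downward closure of feasibility
  have hmono : ∀ A B : Finset (Fin N), A ⊆ B → Feasible B → Feasible A := by
    intro A B hAB hB
    rw [hFeas] at hB ⊢
    refine ⟨fun i => le_trans ?_ (hB.1 i), fun j hj => hB.2 j (hAB hj)⟩
    refine Finset.sum_le_sum_of_subset_of_nonneg (Finset.filter_subset_filter _ hAB) ?_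
    intro k _ _
    exact mul_nonneg (hp k) hτ.le
  have hsucc : ∀ t (ht : t < L.length),
      (L.take (t+1)).toFinset = insert (L.get ⟨t, ht⟩) (L.take t).toFinset := by
    intro t ht
    have h1 : L.take (t+1) = L.take t ++ [L.get ⟨t, ht⟩] := by
      rw [List.take_succ, List.getElem?_eq_getElem ht]
      simp
    rw [h1, List.toFinset_append]
    ext a
    simp [or_comm]
  intro S hS
  have main : ∀ t, t ≤ L.length →
      ∃ S', Feasible S' ∧ (L.take t).toFinset ⊆ S' ∧ S.card ≤ S'.card := by
    intro t
    induction t with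
    | zero => intro _; exact ⟨S, hS, by simp, le_rfl⟩
    | succ t ih =>
      intro ht1
      have ht : t < L.length := ht1
      obtain ⟨S', hS', hsub, hcard⟩ := ih (le_of_lt ht)
      set g := L.get ⟨t, ht⟩ with hg_def
      by_cases hg : g ∈ S'
      · exact ⟨S', hS', by rw [hsucc t ht]; exact Finset.insert_subset hg hsub, hcard⟩
      by_cases hne : (S' \ (L.take t).toFinset).Nonempty
      · set x := (S' \ (L.take t).toFinset).min' hne with hx_def
        have hxmem := (S' \ (L.take t).toFinset).min'_mem hne
        have hxS : x ∈ S' := (Finset.mem_sdiff.mp hxmem).1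
        have hxL : x ∉ (L.take t).toFinset := (Finset.mem_sdiff.mp hxmem).2
        have hxmin : ∀ y ∈ S', y ∉ (L.take t).toFinset → x ≤ y := fun y hy hyL =>
          Finset.min'_le _ _ (Finset.mem_sdiff.mpr ⟨hy, hyL⟩)
        have hins : Feasible (insert x (L.take t).toFinset) :=
          hmono _ S' (Finset.insert_subset hxS hsub) hS'
        have hpg : p g ≤ p x := hgreedy t ht x hxL hins
        have hFg : Feasible (insert g (L.take t).toFinset) := by
          rw [← hsucc t ht]; exact hfeasPrefix (t+1) ht1
        refine ⟨insert g (S'.erase x), ?_, ?_, ?_⟩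
        · rw [hFeas]
          constructor
          · intro i
            by_cases hxi : x ≤ i
            · have hgnot : g ∉ (S'.filter (· ≤ i)).erase x := by
                simp only [Finset.mem_erase, Finset.mem_filter]
                rintro ⟨-, hgS, -⟩
                exact hg hgS
              have hsubf : (insert g (S'.erase x)).filter (· ≤ i) ⊆
                  insert g ((S'.filter (· ≤ i)).erase x) := by
                intro k hk
                simp only [Finset.mem_filter, Finset.mem_insert, Finset.mem_erase] at hk ⊢
                rcases hk with ⟨hk1 | ⟨hk1, hk2⟩, hk3⟩
                · exact Or.inl hk1
                · exact Or.inr ⟨hk1, hk2, hk3⟩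
              calc ∑ k ∈ (insert g (S'.erase x)).filter (· ≤ i), p k * τ
                  ≤ ∑ k ∈ insert g ((S'.filter (· ≤ i)).erase x), p k * τ :=
                    Finset.sum_le_sum_of_subset_of_nonneg hsubf
                      (fun k _ _ => mul_nonneg (hp k) hτ.le)
                _ = p g * τ + ∑ k ∈ (S'.filter (· ≤ i)).erase x, p k * τ :=
                    Finset.sum_insert hgnot
                _ ≤ p x * τ + ∑ k ∈ (S'.filter (· ≤ i)).erase x, p k * τ := by
                    have := mul_le_mul_of_nonneg_right hpg hτ.le
                    linarith
                _ = ∑ k ∈ S'.filter (· ≤ i), p k * τ := by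
                    rw [add_comm]
                    exact Finset.sum_erase_add _ _ (Finset.mem_filter.mpr ⟨hxS, hxi⟩)
                _ ≤ _ := ((hFeas S').mp hS').1 i
            · have hsubf : (insert g (S'.erase x)).filter (· ≤ i) ⊆
                  (insert g (L.take t).toFinset).filter (· ≤ i) := by
                intro k hk
                simp only [Finset.mem_filter, Finset.mem_insert, Finset.mem_erase] at hk ⊢
                rcases hk with ⟨hk1 | ⟨hk1, hk2⟩, hk3⟩
                · exact ⟨Or.inl hk1, hk3⟩
                · refine ⟨Or.inr ?_, hk3⟩
                  by_contra hkL
                  exact hxi (le_trans (hxmin k hk2 hkL) hk3)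
              calc ∑ k ∈ (insert g (S'.erase x)).filter (· ≤ i), p k * τ
                  ≤ ∑ k ∈ (insert g (L.take t).toFinset).filter (· ≤ i), p k * τ :=
                    Finset.sum_le_sum_of_subset_of_nonneg hsubf
                      (fun k _ _ => mul_nonneg (hp k) hτ.le)
                _ ≤ _ := ((hFeas _).mp hFg).1 i
          · intro j hj
            rcases Finset.mem_insert.mp hj with h | hj
            · subst h
              exact ((hFeas _).mp hFg).2 _ (Finset.mem_insert_self _ _)
            · exact ((hFeas S').mp hS').2 j (Finset.mem_of_mem_erase hj)
        · rw [hsucc t ht]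
          exact Finset.insert_subset_insert _
            (fun k hk => Finset.mem_erase.mpr ⟨fun h => hxL (h ▸ hk), hsub hk⟩)
        · have h1 : g ∉ S'.erase x := fun h => hg (Finset.mem_of_mem_erase h)
          rw [Finset.card_insert_of_notMem h1, Finset.card_erase_add_one hxS]
          exact hcard
      · have hsub' : S' ⊆ (L.take t).toFinset := by
          intro k hk
          by_contra hkL
          exact hne ⟨k, Finset.mem_sdiff.mpr ⟨hk, hkL⟩⟩
        refine ⟨(L.take (t+1)).toFinset, hfeasPrefix (t+1) ht1, le_rfl, ?_⟩
        have h1 : S'.card ≤ t := by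
          calc S'.card ≤ (L.take t).toFinset.card := Finset.card_le_card hsub'
            _ ≤ (L.take t).length := (L.take t).toFinset_card_le
            _ ≤ t := by simp
        have h2 : (L.take (t+1)).toFinset.card = t + 1 := by
          rw [List.toFinset_card_of_nodup (hnd.sublist (List.take_sublist _ _))]
          simp [Nat.succ_le_of_lt ht]
        omega
  obtain ⟨S', hS', hsub, hcard⟩ := main L.length le_rfl
  rw [List.take_length] at hsub
  have hkey : S.card ≤ L.toFinset.card := by
    have hSL : S' = L.toFinset := by
      refine Finset.Subset.antisymm ?_ hsub
      intro j hj
      by_contra hjL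
      exact hterm j hjL (hmono _ S' (Finset.insert_subset hj hsub) hS')
    exact hSL ▸ hcard
  refine ⟨?_, hkey⟩
  have hcost : ∀ T : Finset (Fin N),
      (∑ n, (1 - (if n ∈ T then (1:ℝ) else 0)) * c n) = (N : ℝ) * cc - (T.card : ℝ) * cc := by
    intro T
    have : ∀ n : Fin N, (1 - (if n ∈ T then (1:ℝ) else 0)) * c n
        = cc - (if n ∈ T then cc else 0) := by
      intro n
      rw [hc]
      by_cases h : n ∈ T <;> simp [h]
    rw [Finset.sum_congr rfl (fun n _ => this n), Finset.sum_sub_distrib,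
      Finset.sum_ite_mem, Finset.univ_inter, Finset.sum_const, Finset.sum_const]
    simp [mul_comm]
  rw [hcost, hcost]
  have : (S.card : ℝ) * cc ≤ (L.toFinset.card : ℝ) * cc :=
    mul_le_mul_of_nonneg_right (by exact_mod_cast hkey) hcc.le
  linarith
end

section
/- Suppose the H-channel inversion powers are constant, i.e., p_1 = ⋯ = p_N = p for some p ≥ 0, and identify any subset S ⊆ {1,…,N} with the vector α^S ∈ {0,1}^N given by α^S_i = 1 iff i ∈ S. Let S be feasible, let M ⊆ S, let m ∈ {1,…,N} ∖ S be such that every element of S ∖ M is strictly greater than m and M ∪ {m} is feasible, and let j be the smallest element of S ∖ M (assumed nonempty). Then (S ∖ {j}) ∪ {m} is feasible. -/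
/-- Feasibility-preservation step from Appendix B of the paper (constant H-channel inversion
power `p i = pc`): if `S` is feasible, `M' ⊆ S`, `m ∉ S` with every element of `S \ M'`
strictly greater than `m`, `M' ∪ {m}` is feasible, and `j` is the smallest element of the
nonempty set `S \ M'`, then `(S \ {j}) ∪ {m}` is feasible. -/
theorem stmt6 (N : ℕ) (hN : 1 ≤ N) (τ pmax pc : ℝ) (hτ : 0 < τ) (hpmax : 0 < pmax)
    (hpc : 0 ≤ pc)
    (p E : Fin N → ℝ) (hp : ∀ i, p i = pc) (hE : ∀ i, 0 ≤ E i)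
    (Feasible : Finset (Fin N) → Prop)
    (hFeas : ∀ S, Feasible S ↔
      ((∀ i : Fin N, (∑ k ∈ S.filter (· ≤ i), p k * τ)
            ≤ ∑ l ∈ Finset.univ.filter (· ≤ i), E l) ∧
       (∀ i ∈ S, p i ≤ pmax)))
    (S M' : Finset (Fin N)) (m : Fin N)
    (hS : Feasible S) (hMS : M' ⊆ S) (hm : m ∉ S)
    (hgt : ∀ x ∈ S \ M', m < x)
    (hMm : Feasible (insert m M'))
    (hne : (S \ M').Nonempty) :
    Feasible (insert m (S.erase ((S \ M').min' hne))) := by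
  set j := (S \ M').min' hne with hj
  have hjmem : j ∈ S \ M' := (S \ M').min'_mem hne
  have hjS : j ∈ S := (Finset.mem_sdiff.mp hjmem).1
  have hmj : m < j := hgt j hjmem
  have hmSj : m ∉ S.erase j := fun h => hm (Finset.mem_of_mem_erase h)
  rw [hFeas] at hS hMm ⊢
  obtain ⟨hS1, hS2⟩ := hS
  obtain ⟨hM1, hM2⟩ := hMm
  have hptc : ∀ (s : Finset (Fin N)), ∑ k ∈ s, p k * τ = s.card * (pc * τ) := by
    intro s
    rw [Finset.sum_congr rfl (fun k _ => by rw [hp k]), Finset.sum_const, nsmul_eq_mul]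
  constructor
  · intro i
    by_cases hij : j ≤ i
    · -- cardinalities match the original set S
      have hmi : m ≤ i := le_of_lt (lt_of_lt_of_le hmj hij)
      have hjf : j ∈ S.filter (· ≤ i) := Finset.mem_filter.mpr ⟨hjS, hij⟩
      have hcard : ((insert m (S.erase j)).filter (· ≤ i)).card
          = (S.filter (· ≤ i)).card := by
        rw [Finset.filter_insert, if_pos hmi, Finset.card_insert_of_notMem
          (fun h => hmSj (Finset.mem_of_mem_filter _ h)), Finset.filter_erase,
          Finset.card_erase_of_mem hjf]
        have hpos : 1 ≤ (S.filter (· ≤ i)).card := Finset.card_pos.mpr ⟨j, hjf⟩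
        omega
      calc ∑ k ∈ (insert m (S.erase j)).filter (· ≤ i), p k * τ
          = ∑ k ∈ S.filter (· ≤ i), p k * τ := by rw [hptc, hptc, hcard]
        _ ≤ _ := hS1 i
    · -- subset of insert m M'
      have hsub : (insert m (S.erase j)).filter (· ≤ i)
          ⊆ (insert m M').filter (· ≤ i) := by
        intro x hx
        rw [Finset.mem_filter] at hx ⊢
        refine ⟨?_, hx.2⟩
        rcases Finset.mem_insert.mp hx.1 with h | h
        · exact Finset.mem_insert.mpr (Or.inl h)
        · have hxS : x ∈ S := Finset.mem_of_mem_erase h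
          by_cases hxM : x ∈ M'
          · exact Finset.mem_insert.mpr (Or.inr hxM)
          · exfalso
            have hjx : j ≤ x := (S \ M').min'_le x (Finset.mem_sdiff.mpr ⟨hxS, hxM⟩)
            exact hij (le_trans hjx hx.2)
      calc ∑ k ∈ (insert m (S.erase j)).filter (· ≤ i), p k * τ
          ≤ ∑ k ∈ (insert m M').filter (· ≤ i), p k * τ :=
            Finset.sum_le_sum_of_subset_of_nonneg hsub
              (fun k _ _ => mul_nonneg (by rw [hp k]; exact hpc) hτ.le)
        _ ≤ _ := hM1 i
  · intro x hx
    rw [hp x]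
    have := hM2 m (Finset.mem_insert_self m M')
    rwa [hp m] at this
end

section
/- In the finite-horizon MDP defined in the context, for every i ∈ {1,…,N} the function û*_i is non-increasing on the energy grid E: if ε⁻, ε⁺ ∈ E with ε⁻ ≤ ε⁺, then û*_i(ε⁺) ≤ û*_i(ε⁻). -/
/-!
The stage cost `(1 - a) c(γ_G)` does not depend on the battery level, so energy enters only
through the set of allowed actions and the next state. More energy allows more actions and, the
quantizer being monotone, yields a higher next battery level for every harvest `e`. Backward
induction from the horizon then shows each `û*_i` antitone on the grid: its Bellman minimum runs
over more options, each with an expected continuation that is antitone by induction.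
-/

open MeasureTheory Set

noncomputable section

namespace EnergyGrid

variable {M : ℕ} {B x c : ℝ}

def point (M : ℕ) (B : ℝ) (m : ℕ) : ℝ := (2 * (m : ℝ) - 1) * B / (2 * M)

def grid (M : ℕ) (B : ℝ) : Set ℝ := {x | ∃ m : ℕ, 1 ≤ m ∧ m ≤ M ∧ x = point M B m}

def index (M : ℕ) (B x : ℝ) : ℤ := min (⌊(M : ℝ) * min x B / B⌋ + 1) (M : ℤ)

def quant (M : ℕ) (B x : ℝ) : ℝ := ((2 * index M B x - 1 : ℤ) : ℝ) * B / (2 * M)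

lemma quant_eq_point_toNat (hx : 0 ≤ index M B x) :
    quant M B x = point M B (index M B x).toNat := by
  have hcast : ((index M B x).toNat : ℝ) = index M B x := by exact_mod_cast Int.toNat_of_nonneg hx
  rw [quant, point, hcast]
  push_cast
  ring

lemma index_mono (hB : 0 ≤ B) : Monotone (index M B) := fun x y hxy => by
  unfold index
  gcongr

lemma quant_mono (hB : 0 ≤ B) : Monotone (quant M B) := fun x y hxy => by
  unfold quant
  have hindex := index_mono (M := M) hB hxy
  gcongr

lemma one_le_index (hM : 1 ≤ M) (hB : 0 ≤ B) (hx : 0 ≤ x) : 1 ≤ index M B x := by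
  have hfloor : 0 ≤ ⌊(M : ℝ) * min x B / B⌋ := Int.floor_nonneg.mpr (by positivity)
  exact le_min (by omega) (by exact_mod_cast hM)

lemma quant_mem_grid (hM : 1 ≤ M) (hB : 0 ≤ B) (hx : 0 ≤ x) : quant M B x ∈ grid M B := by
  have h1 := one_le_index hM hB hx
  have hle : index M B x ≤ M := min_le_right _ _
  exact ⟨_, by omega, by omega, quant_eq_point_toNat (by omega)⟩

lemma nonneg_of_mem_grid (hB : 0 ≤ B) (hx : x ∈ grid M B) : 0 ≤ x := by
  obtain ⟨m, hm, -, rfl⟩ := hx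
  have : (1 : ℝ) ≤ m := by exact_mod_cast hm
  unfold point
  have : (0 : ℝ) ≤ 2 * m - 1 := by linarith
  positivity

/-- `f ∘ quant` factors through the `ℤ`-valued `index`, and every function on `ℤ` is measurable. -/
lemma measurable_comp_quant (f : ℝ → ℝ) : Measurable fun x => f (quant M B x) := by
  have hindex : Measurable (index M B) :=
    (Measurable.floor (by fun_prop)).add_const _ |>.min measurable_const
  exact (measurable_of_countable fun k : ℤ => f (((2 * k - 1 : ℤ) : ℝ) * B / (2 * M))).comp hindex

variable {μ : Measure ℝ} {f : ℝ → ℝ}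

/-- The grid is finite, so `f ∘ quant` is bounded on `[0, ∞)` by the sum of `|f|` over the grid. -/
lemma integrable_comp_quant_add [IsFiniteMeasure μ] (hM : 1 ≤ M) (hB : 0 ≤ B)
    (hμ : ∀ᵐ e ∂μ, 0 ≤ e) (hc : 0 ≤ c) : Integrable (fun e => f (quant M B (c + e))) μ := by
  refine Integrable.mono' (integrable_const (∑ m ∈ Finset.Icc 1 M, |f (point M B m)|))
    ((measurable_comp_quant f).comp (measurable_const_add c)).aestronglyMeasurable ?_
  filter_upwards [hμ] with e he
  obtain ⟨m, hm1, hmM, hm⟩ := quant_mem_grid hM hB (add_nonneg hc he)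
  rw [hm, Real.norm_eq_abs]
  exact Finset.single_le_sum (f := fun m => |f (point M B m)|) (fun _ _ => abs_nonneg _)
    (Finset.mem_Icc.mpr ⟨hm1, hmM⟩)

lemma antitoneOn_integral_comp_quant_add [IsFiniteMeasure μ] (hM : 1 ≤ M) (hB : 0 ≤ B)
    (hμ : ∀ᵐ e ∂μ, 0 ≤ e) (hf : AntitoneOn f (grid M B)) :
    AntitoneOn (fun c => ∫ e, f (quant M B (c + e)) ∂μ) (Ici 0) := by
  intro c (hc : 0 ≤ c) c' _ hcc'
  refine integral_mono_ae (integrable_comp_quant_add hM hB hμ (hc.trans hcc'))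
    (integrable_comp_quant_add hM hB hμ hc) ?_
  filter_upwards [hμ] with e he
  exact hf (quant_mem_grid hM hB (by linarith)) (quant_mem_grid hM hB (by linarith))
    (quant_mono hB (by linarith))

end EnergyGrid

end

lemma antitoneOn_ite_min {α β : Type*} [Preorder α] [LinearOrder β] {s : Set α}
    {p : α → Prop} [DecidablePred p] {a d : α → β}
    (hp : ∀ x ∈ s, ∀ y ∈ s, x ≤ y → p x → p y) (ha : AntitoneOn a s)
    (hd : ∀ x ∈ s, ∀ y ∈ s, x ≤ y → p x → d y ≤ d x) :
    AntitoneOn (fun x => if p x then min (a x) (d x) else a x) s := by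
  intro x hx y hy hxy
  by_cases hpx : p x
  · simp only [hpx, hp x hx y hy hxy hpx, if_true]
    exact min_le_min (ha hx hy hxy) (hd x hx y hy hxy hpx)
  · by_cases hpy : p y
    · simp only [hpx, hpy, if_true, if_false]
      exact (min_le_left _ _).trans (ha hx hy hxy)
    · simp only [hpx, hpy, if_false]
      exact ha hx hy hxy

theorem stmt10_general
    (N M K : ℕ) (hM : 1 ≤ M)
    (B τ CH pHmax : ℝ)
    (hB : 0 < B) (hτ : 0 < τ)
    (H : Fin K → ℝ)
    (μ : Measure ℝ) [IsProbabilityMeasure μ] (hμ : μ (Set.Iio 0) = 0)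
    (Quant : ℝ → ℝ)
    (hQuant : ∀ x, Quant x =
      ((2 * min (⌊(M : ℝ) * min x B / B⌋ + 1) (M : ℤ) - 1 : ℤ) : ℝ) * B / (2 * M))
    (Egrid : Set ℝ)
    (hEgrid : Egrid = {x : ℝ | ∃ m : ℕ, 1 ≤ m ∧ m ≤ M ∧ x = (2 * (m : ℝ) - 1) * B / (2 * M)})
    (ccost : ℝ → ℝ)
    (uhat : (ℝ → ℝ → ℝ → ℝ) → ℝ → ℝ)
    (huhat : ∀ g ε, uhat g ε = ∑ kG : Fin K, ∑ kH : Fin K, g ε (H kG) (H kH))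
    (ustar : ℕ → ℝ → ℝ → ℝ → ℝ)
    (hterm : ∀ ε γG γH, ustar N ε γG γH =
      if CH / γH ≤ min (ε / τ) pHmax then
        min ((1 - (0 : ℝ)) * ccost γG) ((1 - (1 : ℝ)) * ccost γG)
      else (1 - (0 : ℝ)) * ccost γG)
    (hbell : ∀ i, 1 ≤ i → i < N → ∀ ε γG γH, ustar i ε γG γH =
      if CH / γH ≤ min (ε / τ) pHmax then
        min ((1 - (0 : ℝ)) * ccost γG + ((K : ℝ) ^ 2)⁻¹ *
              ∫ e, uhat (ustar (i + 1)) (Quant (ε - 0 * (CH / γH) * τ + e)) ∂μ)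
            ((1 - (1 : ℝ)) * ccost γG + ((K : ℝ) ^ 2)⁻¹ *
              ∫ e, uhat (ustar (i + 1)) (Quant (ε - 1 * (CH / γH) * τ + e)) ∂μ)
      else (1 - (0 : ℝ)) * ccost γG + ((K : ℝ) ^ 2)⁻¹ *
              ∫ e, uhat (ustar (i + 1)) (Quant (ε - 0 * (CH / γH) * τ + e)) ∂μ) :
    ∀ i, 1 ≤ i → i ≤ N → ∀ εm ∈ Egrid, ∀ εp ∈ Egrid, εm ≤ εp →
      uhat (ustar i) εp ≤ uhat (ustar i) εm := by
  obtain rfl : Quant = EnergyGrid.quant M B := funext hQuant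
  obtain rfl : Egrid = EnergyGrid.grid M B := hEgrid
  have hμ' : ∀ᵐ e ∂μ, 0 ≤ e := measure_mono_null (fun e (he : ¬ 0 ≤ e) => not_le.mp he) hμ
  have hfeasible : ∀ γH x, x ∈ EnergyGrid.grid M B → ∀ y ∈ EnergyGrid.grid M B, x ≤ y →
      CH / γH ≤ min (x / τ) pHmax → CH / γH ≤ min (y / τ) pHmax := fun γH x _ y _ hxy h =>
    h.trans (min_le_min_right _ (div_le_div_of_nonneg_right hxy hτ.le))
  have huhat_anti : ∀ g : ℝ → ℝ → ℝ → ℝ, (∀ γG γH, AntitoneOn (g · γG γH) (EnergyGrid.grid M B)) →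
      AntitoneOn (uhat g) (EnergyGrid.grid M B) := fun g hg x hx y hy hxy => by
    rw [huhat, huhat]
    exact Finset.sum_le_sum fun _ _ => Finset.sum_le_sum fun _ _ => hg _ _ hx hy hxy
  have hlast : AntitoneOn (uhat (ustar N)) (EnergyGrid.grid M B) := huhat_anti _ fun γG γH => by
    simp_rw [hterm]
    exact antitoneOn_ite_min (hfeasible γH) antitoneOn_const fun _ _ _ _ _ _ => le_rfl
  have hstep : ∀ i < N, 1 ≤ i → AntitoneOn (uhat (ustar (i + 1))) (EnergyGrid.grid M B) →
      AntitoneOn (uhat (ustar i)) (EnergyGrid.grid M B) := fun i hiN hi hnext =>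
    huhat_anti _ fun γG γH => by
      simp_rw [hbell i hi hiN, zero_mul, sub_zero, one_mul, sub_self]
      have hJ := EnergyGrid.antitoneOn_integral_comp_quant_add hM hB.le hμ' hnext
      refine antitoneOn_ite_min (hfeasible γH) (fun x hx y _ hxy => ?_)
        (fun x hx y _ hxy hpx => ?_)
      · have hx0 := EnergyGrid.nonneg_of_mem_grid hB.le hx
        gcongr _ + _ * ?_
        exact hJ hx0 (hx0.trans hxy) hxy
      · have hdrain : CH / γH * τ ≤ x := (le_div_iff₀ hτ).mp (hpx.trans (min_le_left _ _))
        gcongr _ + _ * ?_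
        exact hJ (sub_nonneg.mpr hdrain) (sub_nonneg.mpr (hdrain.trans hxy)) (by linarith)
  intro i hi hiN
  exact Nat.decreasingInduction' (fun k hkN hik => hstep k hkN (hi.trans hik)) hiN hlast

/-- Lemma 3 of the paper: in the finite-horizon MDP of Section IV, for every block index
`i ∈ {1,…,N}` the aggregate optimal cost-to-go `û*_i` is non-increasing on the energy grid.
Here `ustar i` is the optimal cost-to-go `u*_i` (characterized by the terminal condition and
Bellman's equations), and `uhat g ε = Σ_{γ_G,γ_H} g ε γ_G γ_H`. -/
theorem stmt10
    (N M K : ℕ) (hN : 1 ≤ N) (hM : 1 ≤ M) (hK : 1 ≤ K)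
    (B τ wG wD CG CH pGmax pHmax : ℝ)
    (hB : 0 < B) (hτ : 0 < τ) (hwG : 0 < wG) (hwD : 0 < wD)
    (hCG : 0 < CG) (hCH : 0 < CH) (hpGmax : 0 < pGmax) (hpHmax : 0 < pHmax)
    (κ : ℝ) (hκ : κ = min pGmax (wD / (wG * τ)))
    (H : Fin K → ℝ) (hHpos : ∀ k, 0 < H k) (hHmono : StrictMono H)
    (μ : Measure ℝ) [IsProbabilityMeasure μ] (hμ : μ (Set.Iio 0) = 0)
    (Quant : ℝ → ℝ)
    (hQuant : ∀ x, Quant x =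
      ((2 * min (⌊(M : ℝ) * min x B / B⌋ + 1) (M : ℤ) - 1 : ℤ) : ℝ) * B / (2 * M))
    (Egrid : Set ℝ)
    (hEgrid : Egrid = {x : ℝ | ∃ m : ℕ, 1 ≤ m ∧ m ≤ M ∧ x = (2 * (m : ℝ) - 1) * B / (2 * M)})
    (ccost : ℝ → ℝ)
    (hccost : ∀ γ, ccost γ = if κ < CG / γ then wD else wG * τ * (CG / γ))
    (uhat : (ℝ → ℝ → ℝ → ℝ) → ℝ → ℝ)
    (huhat : ∀ g ε, uhat g ε = ∑ kG : Fin K, ∑ kH : Fin K, g ε (H kG) (H kH))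
    (ustar : ℕ → ℝ → ℝ → ℝ → ℝ)
    (hterm : ∀ ε γG γH, ustar N ε γG γH =
      if CH / γH ≤ min (ε / τ) pHmax then
        min ((1 - (0 : ℝ)) * ccost γG) ((1 - (1 : ℝ)) * ccost γG)
      else (1 - (0 : ℝ)) * ccost γG)
    (hbell : ∀ i, 1 ≤ i → i < N → ∀ ε γG γH, ustar i ε γG γH =
      if CH / γH ≤ min (ε / τ) pHmax then
        min ((1 - (0 : ℝ)) * ccost γG + ((K : ℝ) ^ 2)⁻¹ *
              ∫ e, uhat (ustar (i + 1)) (Quant (ε - 0 * (CH / γH) * τ + e)) ∂μ)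
            ((1 - (1 : ℝ)) * ccost γG + ((K : ℝ) ^ 2)⁻¹ *
              ∫ e, uhat (ustar (i + 1)) (Quant (ε - 1 * (CH / γH) * τ + e)) ∂μ)
      else (1 - (0 : ℝ)) * ccost γG + ((K : ℝ) ^ 2)⁻¹ *
              ∫ e, uhat (ustar (i + 1)) (Quant (ε - 0 * (CH / γH) * τ + e)) ∂μ) :
    ∀ i, 1 ≤ i → i ≤ N → ∀ εm ∈ Egrid, ∀ εp ∈ Egrid, εm ≤ εp →
      uhat (ustar i) εp ≤ uhat (ustar i) εm :=
  stmt10_general N M K hM B τ CH pHmax hB hτ H μ hμ Quant hQuant Egrid hEgrid ccost uhat huhat ustar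
    hterm hbell
end

section
/- In the finite-horizon MDP defined in the context, define the action-value Q_i(s,a) = c(s,a) + K^{−2}·∫ û*_{i+1}(Q(ε − a·p_H^inv(γ_H)·τ + e)) dμ(e) for 1 ≤ i < N and Q_N(s,a) = c(s,a), for s = (ε, γ_G, γ_H) and a ∈ A_s. Fix i ∈ {1,…,N}, ε ∈ E, a channel state γ_H with p_H^inv(γ_H) ≤ min(ε/τ, p_H^max), and channel states γ_G⁻ ≤ γ_G⁺. If Q_i((ε, γ_G⁺, γ_H), 1) ≤ Q_i((ε, γ_G⁺, γ_H), 0), then Q_i((ε, γ_G⁻, γ_H), 1) ≤ Q_i((ε, γ_G⁻, γ_H), 0). -/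
open MeasureTheory

/-- Proposition 2 of the paper: the optimal policy is monotone (threshold-based) in the
G-channel state.  If at state `(ε, γG⁺, γH)` serving with the EH-BS (action 1) is no worse
than action 0, the same holds at any state with a worse G-channel `γG⁻ ≤ γG⁺`. -/
theorem stmt11
    (N M K : ℕ) (hN : 1 ≤ N) (hM : 1 ≤ M) (hK : 1 ≤ K)
    (B τ wG wD CG CH pGmax pHmax : ℝ)
    (hB : 0 < B) (hτ : 0 < τ) (hwG : 0 < wG) (hwD : 0 < wD)
    (hCG : 0 < CG) (hCH : 0 < CH) (hpGmax : 0 < pGmax) (hpHmax : 0 < pHmax)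
    (κ : ℝ) (hκ : κ = min pGmax (wD / (wG * τ)))
    (H : Fin K → ℝ) (hHpos : ∀ k, 0 < H k) (hHmono : StrictMono H)
    (μ : Measure ℝ) [IsProbabilityMeasure μ] (hμ : μ (Set.Iio 0) = 0)
    (Quant : ℝ → ℝ)
    (hQuant : ∀ x, Quant x =
      ((2 * min (⌊(M : ℝ) * min x B / B⌋ + 1) (M : ℤ) - 1 : ℤ) : ℝ) * B / (2 * M))
    (Egrid : Set ℝ)
    (hEgrid : Egrid = {x : ℝ | ∃ m : ℕ, 1 ≤ m ∧ m ≤ M ∧ x = (2 * (m : ℝ) - 1) * B / (2 * M)})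
    (ccost : ℝ → ℝ)
    (hccost : ∀ γ, ccost γ = if κ < CG / γ then wD else wG * τ * (CG / γ))
    (uhat : (ℝ → ℝ → ℝ → ℝ) → ℝ → ℝ)
    (huhat : ∀ g ε, uhat g ε = ∑ kG : Fin K, ∑ kH : Fin K, g ε (H kG) (H kH))
    (ustar : ℕ → ℝ → ℝ → ℝ → ℝ)
    (hterm : ∀ ε γG γH, ustar N ε γG γH =
      if CH / γH ≤ min (ε / τ) pHmax then
        min ((1 - (0 : ℝ)) * ccost γG) ((1 - (1 : ℝ)) * ccost γG)
      else (1 - (0 : ℝ)) * ccost γG)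
    (hbell : ∀ i, 1 ≤ i → i < N → ∀ ε γG γH, ustar i ε γG γH =
      if CH / γH ≤ min (ε / τ) pHmax then
        min ((1 - (0 : ℝ)) * ccost γG + ((K : ℝ) ^ 2)⁻¹ *
              ∫ e, uhat (ustar (i + 1)) (Quant (ε - 0 * (CH / γH) * τ + e)) ∂μ)
            ((1 - (1 : ℝ)) * ccost γG + ((K : ℝ) ^ 2)⁻¹ *
              ∫ e, uhat (ustar (i + 1)) (Quant (ε - 1 * (CH / γH) * τ + e)) ∂μ)
      else (1 - (0 : ℝ)) * ccost γG + ((K : ℝ) ^ 2)⁻¹ *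
              ∫ e, uhat (ustar (i + 1)) (Quant (ε - 0 * (CH / γH) * τ + e)) ∂μ)
    (Qi : ℕ → ℝ → ℝ → ℝ → ℝ → ℝ)
    (hQi : ∀ i, 1 ≤ i → i ≤ N → ∀ ε γG γH a, Qi i ε γG γH a =
      if i = N then (1 - a) * ccost γG
      else (1 - a) * ccost γG + ((K : ℝ) ^ 2)⁻¹ *
            ∫ e, uhat (ustar (i + 1)) (Quant (ε - a * (CH / γH) * τ + e)) ∂μ)
    :
    ∀ i, 1 ≤ i → i ≤ N → ∀ ε ∈ Egrid, ∀ γH ∈ Set.range H,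
      CH / γH ≤ min (ε / τ) pHmax →
      ∀ γGm ∈ Set.range H, ∀ γGp ∈ Set.range H, γGm ≤ γGp →
      Qi i ε γGp γH 1 ≤ Qi i ε γGp γH 0 →
      Qi i ε γGm γH 1 ≤ Qi i ε γGm γH 0 := by
  intro i hi1 hiN ε hε γH hγH hfeas γGm hγGm γGp hγGp hle h
  obtain ⟨km, rfl⟩ := hγGm
  obtain ⟨kp, rfl⟩ := hγGp
  have hmpos : 0 < H km := hHpos km
  have hppos : 0 < H kp := hHpos kp
  have hccmono : ccost (H kp) ≤ ccost (H km) := by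
    rw [hccost, hccost]
    have hdiv : CG / H kp ≤ CG / H km := by
      apply div_le_div_of_nonneg_left hCG.le hmpos hle
    by_cases h1 : κ < CG / H km
    · simp only [if_pos h1]
      by_cases h2 : κ < CG / H kp
      · simp [h2]
      · simp only [if_neg h2]
        push_neg at h2
        have hκle : κ ≤ wD / (wG * τ) := by rw [hκ]; exact min_le_right _ _
        calc wG * τ * (CG / H kp) ≤ wG * τ * κ := by
              apply mul_le_mul_of_nonneg_left h2 (by positivity)
          _ ≤ wG * τ * (wD / (wG * τ)) := by
              apply mul_le_mul_of_nonneg_left hκle (by positivity)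
          _ = wD := by field_simp
    · have h2 : ¬ κ < CG / H kp := fun hh => h1 (lt_of_lt_of_le hh hdiv)
      simp only [if_neg h1, if_neg h2]
      apply mul_le_mul_of_nonneg_left hdiv (by positivity)
  rw [hQi i hi1 hiN ε (H kp) γH 1, hQi i hi1 hiN ε (H kp) γH 0] at h
  rw [hQi i hi1 hiN ε (H km) γH 1, hQi i hi1 hiN ε (H km) γH 0]
  by_cases hiN' : i = N
  · simp only [if_pos hiN'] at h ⊢
    linarith
  · simp only [if_neg hiN'] at h ⊢
    linarith
end

section
/- In the finite-horizon MDP defined in the context, define the action-value Q_i(s,a) = c(s,a) + K^{−2}·∫ û*_{i+1}(Q(ε − a·p_H^inv(γ_H)·τ + e)) dμ(e) for 1 ≤ i < N and Q_N(s,a) = c(s,a), for s = (ε, γ_G, γ_H) and a ∈ A_s. Fix i ∈ {1,…,N}, ε ∈ E, a channel state γ_G, and channel states γ_H⁻ ≤ γ_H⁺ with p_H^inv(γ_H⁻) ≤ min(ε/τ, p_H^max) (hence also p_H^inv(γ_H⁺) ≤ min(ε/τ, p_H^max)). If Q_i((ε, γ_G, γ_H⁻), 1) ≤ Q_i((ε,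 γ_G, γ_H⁻), 0), then Q_i((ε, γ_G, γ_H⁺), 1) ≤ Q_i((ε, γ_G, γ_H⁺), 0). -/
open MeasureTheory

lemma aux_integrable {μ : Measure ℝ} [IsProbabilityMeasure μ] {q : ℝ → ℝ}
    (hq : Measurable q) {S : Finset ℝ} (hS : ∀ᵐ e ∂μ, q e ∈ S) (F : ℝ → ℝ) :
    Integrable (fun e => F (q e)) μ := by
  have hg : Integrable (fun e => ∑ s ∈ S, if q e = s then F s else 0) μ := by
    apply integrable_finset_sum
    intro s _
    have h : (fun e => if q e = s then F s else 0)
        = Set.indicator (q ⁻¹' {s}) (fun _ => F s) := by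
      ext e; simp [Set.indicator, Set.mem_preimage]
    rw [h]
    exact (integrable_const (F s)).indicator (hq (measurableSet_singleton s))
  refine hg.congr ?_
  filter_upwards [hS] with e he
  rw [Finset.sum_ite_eq S (q e) F, if_pos he]

/-- Proposition 3 of the paper: the optimal policy is monotone (threshold-based) in the
H-channel state.  If at state `(ε, γG, γH⁻)` serving with the EH-BS (action 1) is no worse
than action 0, the same holds at any state with a better H-channel `γH⁺ ≥ γH⁻`. -/
theorem stmt12
    (N M K : ℕ) (hN : 1 ≤ N) (hM : 1 ≤ M) (hK : 1 ≤ K)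
    (B τ wG wD CG CH pGmax pHmax : ℝ)
    (hB : 0 < B) (hτ : 0 < τ) (hwG : 0 < wG) (hwD : 0 < wD)
    (hCG : 0 < CG) (hCH : 0 < CH) (hpGmax : 0 < pGmax) (hpHmax : 0 < pHmax)
    (κ : ℝ) (hκ : κ = min pGmax (wD / (wG * τ)))
    (H : Fin K → ℝ) (hHpos : ∀ k, 0 < H k) (hHmono : StrictMono H)
    (μ : Measure ℝ) [IsProbabilityMeasure μ] (hμ : μ (Set.Iio 0) = 0)
    (Quant : ℝ → ℝ)
    (hQuant : ∀ x, Quant x =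
      ((2 * min (⌊(M : ℝ) * min x B / B⌋ + 1) (M : ℤ) - 1 : ℤ) : ℝ) * B / (2 * M))
    (Egrid : Set ℝ)
    (hEgrid : Egrid = {x : ℝ | ∃ m : ℕ, 1 ≤ m ∧ m ≤ M ∧ x = (2 * (m : ℝ) - 1) * B / (2 * M)})
    (ccost : ℝ → ℝ)
    (hccost : ∀ γ, ccost γ = if κ < CG / γ then wD else wG * τ * (CG / γ))
    (uhat : (ℝ → ℝ → ℝ → ℝ) → ℝ → ℝ)
    (huhat : ∀ g ε, uhat g ε = ∑ kG : Fin K, ∑ kH : Fin K, g ε (H kG) (H kH))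
    (ustar : ℕ → ℝ → ℝ → ℝ → ℝ)
    (hterm : ∀ ε γG γH, ustar N ε γG γH =
      if CH / γH ≤ min (ε / τ) pHmax then
        min ((1 - (0 : ℝ)) * ccost γG) ((1 - (1 : ℝ)) * ccost γG)
      else (1 - (0 : ℝ)) * ccost γG)
    (hbell : ∀ i, 1 ≤ i → i < N → ∀ ε γG γH, ustar i ε γG γH =
      if CH / γH ≤ min (ε / τ) pHmax then
        min ((1 - (0 : ℝ)) * ccost γG + ((K : ℝ) ^ 2)⁻¹ *
              ∫ e, uhat (ustar (i + 1)) (Quant (ε - 0 * (CH / γH) * τ + e)) ∂μ)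
            ((1 - (1 : ℝ)) * ccost γG + ((K : ℝ) ^ 2)⁻¹ *
              ∫ e, uhat (ustar (i + 1)) (Quant (ε - 1 * (CH / γH) * τ + e)) ∂μ)
      else (1 - (0 : ℝ)) * ccost γG + ((K : ℝ) ^ 2)⁻¹ *
              ∫ e, uhat (ustar (i + 1)) (Quant (ε - 0 * (CH / γH) * τ + e)) ∂μ)
    (Qi : ℕ → ℝ → ℝ → ℝ → ℝ → ℝ)
    (hQi : ∀ i, 1 ≤ i → i ≤ N → ∀ ε γG γH a, Qi i ε γG γH a =
      if i = N then (1 - a) * ccost γG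
      else (1 - a) * ccost γG + ((K : ℝ) ^ 2)⁻¹ *
            ∫ e, uhat (ustar (i + 1)) (Quant (ε - a * (CH / γH) * τ + e)) ∂μ)
    :
    ∀ i, 1 ≤ i → i ≤ N → ∀ ε ∈ Egrid, ∀ γG ∈ Set.range H,
      ∀ γHm ∈ Set.range H, ∀ γHp ∈ Set.range H, γHm ≤ γHp →
      CH / γHm ≤ min (ε / τ) pHmax →
      Qi i ε γG γHm 1 ≤ Qi i ε γG γHm 0 →
      Qi i ε γG γHp 1 ≤ Qi i ε γG γHp 0 := by
  -- basic facts about the quantizer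
  have qmeas : Measurable Quant := by
    have h : Quant = fun x =>
        ((2 * min (⌊(M : ℝ) * min x B / B⌋ + 1) (M : ℤ) - 1 : ℤ) : ℝ) * B / (2 * M) :=
      funext hQuant
    rw [h]
    have h1 : Measurable fun x : ℝ => (M : ℝ) * min x B / B :=
      ((measurable_id.min measurable_const).const_mul _).div_const _
    have h2 : Measurable fun x : ℝ => (2 * min (⌊(M : ℝ) * min x B / B⌋ + 1) (M : ℤ) - 1 : ℤ) :=
      (((h1.floor.add_const 1).min measurable_const).const_mul 2).sub_const 1
    exact ((measurable_from_top.comp h2 : Measurable fun x : ℝ =>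
      ((2 * min (⌊(M : ℝ) * min x B / B⌋ + 1) (M : ℤ) - 1 : ℤ) : ℝ)).mul_const B).div_const _
  have qmono : Monotone Quant := by
    intro x y hxy
    rw [hQuant, hQuant]
    have h1 : min x B ≤ min y B := min_le_min hxy le_rfl
    have h2 : (M : ℝ) * min x B / B ≤ (M : ℝ) * min y B / B := by gcongr
    have h3 : (⌊(M : ℝ) * min x B / B⌋ : ℤ) ≤ ⌊(M : ℝ) * min y B / B⌋ := Int.floor_le_floor h2
    have h4 : (2 * min (⌊(M : ℝ) * min x B / B⌋ + 1) (M : ℤ) - 1 : ℤ)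
        ≤ (2 * min (⌊(M : ℝ) * min y B / B⌋ + 1) (M : ℤ) - 1 : ℤ) := by
      have := min_le_min (add_le_add_right h3 1) (le_refl (M : ℤ)); omega
    have h5 : ((2 * min (⌊(M : ℝ) * min x B / B⌋ + 1) (M : ℤ) - 1 : ℤ) : ℝ)
        ≤ ((2 * min (⌊(M : ℝ) * min y B / B⌋ + 1) (M : ℤ) - 1 : ℤ) : ℝ) := by exact_mod_cast h4
    have hM0 : (0:ℝ) < 2 * M := by positivity
    gcongr
  have qbound : ∀ x : ℝ, 0 ≤ x → 1 ≤ min (⌊(M : ℝ) * min x B / B⌋ + 1) (M : ℤ) ∧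
      min (⌊(M : ℝ) * min x B / B⌋ + 1) (M : ℤ) ≤ (M : ℤ) := by
    intro x hx
    have h0 : (0:ℝ) ≤ min x B := le_min hx hB.le
    have h1 : (0:ℝ) ≤ (M : ℝ) * min x B / B := by positivity
    have h2 : (0:ℤ) ≤ ⌊(M : ℝ) * min x B / B⌋ := Int.floor_nonneg.mpr h1
    exact ⟨le_min (by omega) (by exact_mod_cast hM), min_le_right _ _⟩
  set S : Finset ℝ :=
    (Finset.Icc 1 M).image (fun m : ℕ => (2 * (m : ℝ) - 1) * B / (2 * (M:ℝ))) with hS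
  have qmem : ∀ x : ℝ, 0 ≤ x → Quant x ∈ S := by
    intro x hx
    obtain ⟨hlb, hub⟩ := qbound x hx
    refine Finset.mem_image.mpr ⟨(min (⌊(M : ℝ) * min x B / B⌋ + 1) (M : ℤ)).toNat, ?_, ?_⟩
    · simp only [Finset.mem_Icc]; omega
    · rw [hQuant]
      rw [show (((min (⌊(M : ℝ) * min x B / B⌋ + 1) (M : ℤ)).toNat : ℕ) : ℝ)
          = ((min (⌊(M : ℝ) * min x B / B⌋ + 1) (M : ℤ) : ℤ) : ℝ) from by
        exact_mod_cast Int.toNat_of_nonneg (by omega)]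
      push_cast
      ring
  have qnonneg : ∀ x : ℝ, 0 ≤ x → 0 ≤ Quant x := by
    intro x hx
    obtain ⟨hlb, _⟩ := qbound x hx
    rw [hQuant]
    have h5 : (0:ℝ) ≤ ((2 * min (⌊(M : ℝ) * min x B / B⌋ + 1) (M : ℤ) - 1 : ℤ) : ℝ) := by
      exact_mod_cast (by omega : (0:ℤ) ≤ 2 * min (⌊(M : ℝ) * min x B / B⌋ + 1) (M : ℤ) - 1)
    have hM0 : (0:ℝ) ≤ 2 * (M:ℝ) := by positivity
    positivity
  -- a.e. nonnegativity of harvested energy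
  have hae : ∀ᵐ e ∂μ, (0:ℝ) ≤ e := by
    refine MeasureTheory.ae_iff.mpr ?_
    simpa [Set.Iio, not_le] using hμ
  -- monotone comparison of shifted integrals
  have intmono : ∀ (F : ℝ → ℝ), (∀ x y : ℝ, 0 ≤ x → x ≤ y → F y ≤ F x) →
      ∀ c1 c2 : ℝ, 0 ≤ c1 → c1 ≤ c2 →
      (∫ e, F (Quant (c2 + e)) ∂μ) ≤ ∫ e, F (Quant (c1 + e)) ∂μ := by
    intro F hF c1 c2 hc1 hc12
    have hm2 : Measurable fun e : ℝ => Quant (c2 + e) := qmeas.comp (measurable_id.const_add c2)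
    have hm1 : Measurable fun e : ℝ => Quant (c1 + e) := qmeas.comp (measurable_id.const_add c1)
    have hS2 : ∀ᵐ e ∂μ, Quant (c2 + e) ∈ S := hae.mono fun e he => qmem _ (by linarith)
    have hS1 : ∀ᵐ e ∂μ, Quant (c1 + e) ∈ S := hae.mono fun e he => qmem _ (by linarith)
    refine integral_mono_ae (aux_integrable hm2 hS2 F) (aux_integrable hm1 hS1 F) ?_
    filter_upwards [hae] with e he
    exact hF _ _ (qnonneg _ (by linarith)) (qmono (by linarith))
  -- the cost-to-go functions are antitone in the battery level
  have key : ∀ d j, 1 ≤ j → j ≤ N → N ≤ j + d → ∀ ε1 ε2 : ℝ, 0 ≤ ε1 → ε1 ≤ ε2 →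
      ∀ kG kH : Fin K, ustar j ε2 (H kG) (H kH) ≤ ustar j ε1 (H kG) (H kH) := by
    intro d
    induction d with
    | zero =>
      intro j h1 h2 h3 ε1 ε2 hε1 hεle kG kH
      have hj : j = N := by omega
      subst hj
      rw [hterm, hterm]
      have hmono : CH / H kH ≤ min (ε1 / τ) pHmax → CH / H kH ≤ min (ε2 / τ) pHmax := by
        intro hc
        refine le_trans hc (min_le_min ?_ le_rfl)
        gcongr
      by_cases hc1 : CH / H kH ≤ min (ε1 / τ) pHmax
      · rw [if_pos hc1, if_pos (hmono hc1)]
      · rw [if_neg hc1]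
        split_ifs with hc2
        · exact min_le_left _ _
        · exact le_rfl
    | succ d ih =>
      intro j h1 h2 h3 ε1 ε2 hε1 hεle kG kH
      by_cases hjN : j = N
      · subst hjN
        rw [hterm, hterm]
        have hmono : CH / H kH ≤ min (ε1 / τ) pHmax → CH / H kH ≤ min (ε2 / τ) pHmax := by
          intro hc
          refine le_trans hc (min_le_min ?_ le_rfl)
          gcongr
        by_cases hc1 : CH / H kH ≤ min (ε1 / τ) pHmax
        · rw [if_pos hc1, if_pos (hmono hc1)]
        · rw [if_neg hc1]
          split_ifs with hc2
          · exact min_le_left _ _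
          · exact le_rfl
      · have hjlt : j < N := by omega
        have hF : ∀ x y : ℝ, 0 ≤ x → x ≤ y →
            uhat (ustar (j + 1)) y ≤ uhat (ustar (j + 1)) x := by
          intro x y hx hxy
          rw [huhat, huhat]
          refine Finset.sum_le_sum fun kG' _ => Finset.sum_le_sum fun kH' _ => ?_
          exact ih (j + 1) (by omega) (by omega) (by omega) x y hx hxy kG' kH'
        rw [hbell j h1 hjlt, hbell j h1 hjlt]
        simp only [zero_mul, sub_zero, one_mul, sub_self, zero_add]
        have hKpos : (0:ℝ) ≤ ((K : ℝ) ^ 2)⁻¹ := by positivity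
        have hA0 : ((K : ℝ) ^ 2)⁻¹ * (∫ e, uhat (ustar (j + 1)) (Quant (ε2 + e)) ∂μ)
            ≤ ((K : ℝ) ^ 2)⁻¹ * ∫ e, uhat (ustar (j + 1)) (Quant (ε1 + e)) ∂μ :=
          mul_le_mul_of_nonneg_left (intmono _ hF ε1 ε2 hε1 hεle) hKpos
        have hmono : CH / H kH ≤ min (ε1 / τ) pHmax → CH / H kH ≤ min (ε2 / τ) pHmax := by
          intro hc
          refine le_trans hc (min_le_min ?_ le_rfl)
          gcongr
        by_cases hc1 : CH / H kH ≤ min (ε1 / τ) pHmax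
        · rw [if_pos hc1, if_pos (hmono hc1)]
          refine min_le_min (add_le_add le_rfl hA0) ?_
          have hτ1 : CH / H kH * τ ≤ ε1 := by
            have := le_trans hc1 (min_le_left _ _)
            calc CH / H kH * τ ≤ ε1 / τ * τ := by gcongr
            _ = ε1 := by field_simp
          refine mul_le_mul_of_nonneg_left
            (intmono _ hF (ε1 - CH / H kH * τ) (ε2 - CH / H kH * τ) (by linarith)
              (by linarith)) hKpos
        · rw [if_neg hc1]
          have hL : (if CH / H kH ≤ min (ε2 / τ) pHmax then
              min (ccost (H kG) + ((K : ℝ) ^ 2)⁻¹ *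
                    ∫ e, uhat (ustar (j + 1)) (Quant (ε2 + e)) ∂μ)
                  (((K : ℝ) ^ 2)⁻¹ *
                    ∫ e, uhat (ustar (j + 1)) (Quant (ε2 - CH / H kH * τ + e)) ∂μ)
            else ccost (H kG) + ((K : ℝ) ^ 2)⁻¹ *
                    ∫ e, uhat (ustar (j + 1)) (Quant (ε2 + e)) ∂μ)
            ≤ ccost (H kG) + ((K : ℝ) ^ 2)⁻¹ *
                    ∫ e, uhat (ustar (j + 1)) (Quant (ε2 + e)) ∂μ := by
            split_ifs with hc2
            · exact min_le_left _ _
            · exact le_rfl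
          exact le_trans hL (add_le_add le_rfl hA0)
  -- main argument
  intro i hi1 hiN ε hε γG hγG γHm hγHm γHp hγHp hle hfeas hQm
  obtain ⟨kG, rfl⟩ := hγG
  obtain ⟨km, rfl⟩ := hγHm
  obtain ⟨kp, rfl⟩ := hγHp
  have hγGpos := hHpos kG
  have hγHmpos := hHpos km
  have hccost_nonneg : 0 ≤ ccost (H kG) := by
    rw [hccost]
    split_ifs
    · exact hwD.le
    · positivity
  by_cases hiN' : i = N
  · rw [hQi i hi1 hiN ε (H kG) (H kp) 1, hQi i hi1 hiN ε (H kG) (H kp) 0]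
    simp only [if_pos hiN']
    nlinarith [hccost_nonneg]
  · rw [hQi i hi1 hiN ε (H kG) (H kp) 1, hQi i hi1 hiN ε (H kG) (H kp) 0]
    rw [hQi i hi1 hiN ε (H kG) (H km) 1, hQi i hi1 hiN ε (H kG) (H km) 0] at hQm
    simp only [if_neg hiN', zero_mul, sub_zero, one_mul, sub_self, zero_add] at hQm ⊢
    have hF : ∀ x y : ℝ, 0 ≤ x → x ≤ y →
        uhat (ustar (i + 1)) y ≤ uhat (ustar (i + 1)) x := by
      intro x y hx hxy
      rw [huhat, huhat]
      refine Finset.sum_le_sum fun kG' _ => Finset.sum_le_sum fun kH' _ => ?_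
      exact key (N - (i + 1)) (i + 1) (by omega) (by omega) (by omega) x y hx hxy kG' kH'
    have hdiv : CH / H kp ≤ CH / H km := by gcongr
    have hτ1 : CH / H km * τ ≤ ε := by
      have := le_trans hfeas (min_le_left _ _)
      calc CH / H km * τ ≤ ε / τ * τ := by gcongr
      _ = ε := by field_simp
    have hKpos : (0:ℝ) ≤ ((K : ℝ) ^ 2)⁻¹ := by positivity
    have hint : (∫ e, uhat (ustar (i + 1)) (Quant (ε - CH / H kp * τ + e)) ∂μ)
        ≤ ∫ e, uhat (ustar (i + 1)) (Quant (ε - CH / H km * τ + e)) ∂μ := by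
      refine intmono _ hF (ε - CH / H km * τ) (ε - CH / H kp * τ) (by linarith) ?_
      nlinarith
    calc ((K : ℝ) ^ 2)⁻¹ * ∫ e, uhat (ustar (i + 1)) (Quant (ε - CH / H kp * τ + e)) ∂μ
        ≤ ((K : ℝ) ^ 2)⁻¹ * ∫ e, uhat (ustar (i + 1)) (Quant (ε - CH / H km * τ + e)) ∂μ :=
          mul_le_mul_of_nonneg_left hint hKpos
      _ ≤ _ := hQm
end

section
/- In the finite-horizon MDP defined in the context, define the action-value Q_i(s,a) = c(s,a) + K^{−2}·∫ û*_{i+1}(Q(ε − a·p_H^inv(γ_H)·τ + e)) dμ(e) for 1 ≤ i < N and Q_N(s,a) = c(s,a). Fix i ∈ {1,…,N} and a state s = (ε, γ_G, γ_H) with p_H^inv(γ_H) ≤ min(ε/τ, p_H^max) and Q_i(s,1) ≤ Q_i(s,0). Then for every channel state γ_G' ≤ γ_G, u*_i(ε, γ_G', γ_H) = u*_i(ε, γ_G, γ_H). -/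
open MeasureTheory

/-- Part 1 of Proposition 4 of the paper: below the G-channel threshold the optimal
cost-to-go function is constant in the G-channel state.  If at `(ε, γG, γH)` action 1 is
allowed and no worse than action 0, then `u*_i(ε, γG', γH) = u*_i(ε, γG, γH)` for every
channel state `γG' ≤ γG`. -/
theorem stmt13
    (N M K : ℕ) (hN : 1 ≤ N) (hM : 1 ≤ M) (hK : 1 ≤ K)
    (B τ wG wD CG CH pGmax pHmax : ℝ)
    (hB : 0 < B) (hτ : 0 < τ) (hwG : 0 < wG) (hwD : 0 < wD)
    (hCG : 0 < CG) (hCH : 0 < CH) (hpGmax : 0 < pGmax) (hpHmax : 0 < pHmax)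
    (κ : ℝ) (hκ : κ = min pGmax (wD / (wG * τ)))
    (H : Fin K → ℝ) (hHpos : ∀ k, 0 < H k) (hHmono : StrictMono H)
    (μ : Measure ℝ) [IsProbabilityMeasure μ] (hμ : μ (Set.Iio 0) = 0)
    (Quant : ℝ → ℝ)
    (hQuant : ∀ x, Quant x =
      ((2 * min (⌊(M : ℝ) * min x B / B⌋ + 1) (M : ℤ) - 1 : ℤ) : ℝ) * B / (2 * M))
    (Egrid : Set ℝ)
    (hEgrid : Egrid = {x : ℝ | ∃ m : ℕ, 1 ≤ m ∧ m ≤ M ∧ x = (2 * (m : ℝ) - 1) * B / (2 * M)})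
    (ccost : ℝ → ℝ)
    (hccost : ∀ γ, ccost γ = if κ < CG / γ then wD else wG * τ * (CG / γ))
    (uhat : (ℝ → ℝ → ℝ → ℝ) → ℝ → ℝ)
    (huhat : ∀ g ε, uhat g ε = ∑ kG : Fin K, ∑ kH : Fin K, g ε (H kG) (H kH))
    (ustar : ℕ → ℝ → ℝ → ℝ → ℝ)
    (hterm : ∀ ε γG γH, ustar N ε γG γH =
      if CH / γH ≤ min (ε / τ) pHmax then
        min ((1 - (0 : ℝ)) * ccost γG) ((1 - (1 : ℝ)) * ccost γG)
      else (1 - (0 : ℝ)) * ccost γG)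
    (hbell : ∀ i, 1 ≤ i → i < N → ∀ ε γG γH, ustar i ε γG γH =
      if CH / γH ≤ min (ε / τ) pHmax then
        min ((1 - (0 : ℝ)) * ccost γG + ((K : ℝ) ^ 2)⁻¹ *
              ∫ e, uhat (ustar (i + 1)) (Quant (ε - 0 * (CH / γH) * τ + e)) ∂μ)
            ((1 - (1 : ℝ)) * ccost γG + ((K : ℝ) ^ 2)⁻¹ *
              ∫ e, uhat (ustar (i + 1)) (Quant (ε - 1 * (CH / γH) * τ + e)) ∂μ)
      else (1 - (0 : ℝ)) * ccost γG + ((K : ℝ) ^ 2)⁻¹ *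
              ∫ e, uhat (ustar (i + 1)) (Quant (ε - 0 * (CH / γH) * τ + e)) ∂μ)
    (Qi : ℕ → ℝ → ℝ → ℝ → ℝ → ℝ)
    (hQi : ∀ i, 1 ≤ i → i ≤ N → ∀ ε γG γH a, Qi i ε γG γH a =
      if i = N then (1 - a) * ccost γG
      else (1 - a) * ccost γG + ((K : ℝ) ^ 2)⁻¹ *
            ∫ e, uhat (ustar (i + 1)) (Quant (ε - a * (CH / γH) * τ + e)) ∂μ)
    :
    ∀ i, 1 ≤ i → i ≤ N → ∀ ε ∈ Egrid, ∀ γG ∈ Set.range H, ∀ γH ∈ Set.range H,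
      CH / γH ≤ min (ε / τ) pHmax →
      Qi i ε γG γH 1 ≤ Qi i ε γG γH 0 →
      ∀ γG' ∈ Set.range H, γG' ≤ γG →
        ustar i ε γG' γH = ustar i ε γG γH := by
  intro i hi1 hiN ε hε γG hγG γH hγH hcond hQ γG' hγG' hle
  obtain ⟨kG, rfl⟩ := hγG
  obtain ⟨kG', rfl⟩ := hγG'
  have hpos : (0:ℝ) < H kG := hHpos kG
  have hpos' : (0:ℝ) < H kG' := hHpos kG'
  have hcnonneg : ∀ γ : ℝ, 0 < γ → 0 ≤ ccost γ := by
    intro γ hγ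
    rw [hccost]
    split
    · linarith
    · positivity
  have hκwd : κ ≤ wD / (wG * τ) := by rw [hκ]; exact min_le_right _ _
  have hdiv : CG / H kG ≤ CG / H kG' :=
    div_le_div_of_nonneg_left (le_of_lt hCG) hpos' hle
  have hcmono : ccost (H kG) ≤ ccost (H kG') := by
    rw [hccost, hccost]
    split_ifs with h1 h2
    · exact le_refl _
    · exact absurd (lt_of_lt_of_le h1 hdiv) h2
    · have h1' : CG / H kG ≤ κ := not_lt.mp h1
      have hwτ : (0:ℝ) < wG * τ := by positivity
      have hk : κ * (wG * τ) ≤ wD := (le_div_iff₀ hwτ).mp hκwd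
      nlinarith
    · have hwτ : (0:ℝ) ≤ wG * τ := by positivity
      nlinarith
  rcases eq_or_lt_of_le hiN with hEq | hlt
  · subst hEq
    rw [hterm, hterm, if_pos hcond, if_pos hcond]
    have h1 : min ((1 - (0:ℝ)) * ccost (H kG')) ((1 - (1:ℝ)) * ccost (H kG'))
        = (1 - (1:ℝ)) * ccost (H kG') := by
      apply min_eq_right
      have := hcnonneg (H kG') hpos'
      nlinarith
    have h2 : min ((1 - (0:ℝ)) * ccost (H kG)) ((1 - (1:ℝ)) * ccost (H kG))
        = (1 - (1:ℝ)) * ccost (H kG) := by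
      apply min_eq_right
      have := hcnonneg (H kG) hpos
      nlinarith
    rw [h1, h2]
    ring
  · have hne : i ≠ N := Nat.ne_of_lt hlt
    rw [hQi i hi1 hiN, hQi i hi1 hiN, if_neg hne, if_neg hne] at hQ
    rw [hbell i hi1 hlt, hbell i hi1 hlt, if_pos hcond, if_pos hcond]
    set I0 := ∫ e, uhat (ustar (i + 1)) (Quant (ε - 0 * (CH / γH) * τ + e)) ∂μ with hI0
    set I1 := ∫ e, uhat (ustar (i + 1)) (Quant (ε - 1 * (CH / γH) * τ + e)) ∂μ with hI1
    set c := ((K : ℝ) ^ 2)⁻¹ with hc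
    have key : (1 - (1:ℝ)) * ccost (H kG) + c * I1 ≤ (1 - (0:ℝ)) * ccost (H kG) + c * I0 := hQ
    have h2 : min ((1 - (0:ℝ)) * ccost (H kG) + c * I0) ((1 - (1:ℝ)) * ccost (H kG) + c * I1)
        = (1 - (1:ℝ)) * ccost (H kG) + c * I1 := min_eq_right key
    have h1 : min ((1 - (0:ℝ)) * ccost (H kG') + c * I0) ((1 - (1:ℝ)) * ccost (H kG') + c * I1)
        = (1 - (1:ℝ)) * ccost (H kG') + c * I1 := by
      apply min_eq_right
      nlinarith
    rw [h1, h2]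
    ring
end

section
/- In the finite-horizon MDP defined in the context, define the action-value Q_i(s,a) = c(s,a) + K^{−2}·∫ û*_{i+1}(Q(ε − a·p_H^inv(γ_H)·τ + e)) dμ(e) for 1 ≤ i < N and Q_N(s,a) = c(s,a). Fix i ∈ {1,…,N} and a state s = (ε, γ_G, γ_H) such that either p_H^inv(γ_H) > min(ε/τ, p_H^max) (action 1 not allowed) or Q_i(s,0) < Q_i(s,1). Then for every channel state γ_H' ≤ γ_H, u*_i(ε, γ_G, γ_H') = u*_i(ε, γ_G, γ_H). -/
open MeasureTheory

/-- Part 2 of Proposition 4 of the paper: strictly below the H-channel threshold the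
optimal cost-to-go function is constant in the H-channel state.  If at `(ε, γG, γH)` action 1
is not allowed or action 0 is strictly better, then `u*_i(ε, γG, γH') = u*_i(ε, γG, γH)` for
every channel state `γH' ≤ γH`. -/
theorem stmt14
    (N M K : ℕ) (hN : 1 ≤ N) (hM : 1 ≤ M) (hK : 1 ≤ K)
    (B τ wG wD CG CH pGmax pHmax : ℝ)
    (hB : 0 < B) (hτ : 0 < τ) (hwG : 0 < wG) (hwD : 0 < wD)
    (hCG : 0 < CG) (hCH : 0 < CH) (hpGmax : 0 < pGmax) (hpHmax : 0 < pHmax)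
    (κ : ℝ) (hκ : κ = min pGmax (wD / (wG * τ)))
    (H : Fin K → ℝ) (hHpos : ∀ k, 0 < H k) (hHmono : StrictMono H)
    (μ : Measure ℝ) [IsProbabilityMeasure μ] (hμ : μ (Set.Iio 0) = 0)
    (Quant : ℝ → ℝ)
    (hQuant : ∀ x, Quant x =
      ((2 * min (⌊(M : ℝ) * min x B / B⌋ + 1) (M : ℤ) - 1 : ℤ) : ℝ) * B / (2 * M))
    (Egrid : Set ℝ)
    (hEgrid : Egrid = {x : ℝ | ∃ m : ℕ, 1 ≤ m ∧ m ≤ M ∧ x = (2 * (m : ℝ) - 1) * B / (2 * M)})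
    (ccost : ℝ → ℝ)
    (hccost : ∀ γ, ccost γ = if κ < CG / γ then wD else wG * τ * (CG / γ))
    (uhat : (ℝ → ℝ → ℝ → ℝ) → ℝ → ℝ)
    (huhat : ∀ g ε, uhat g ε = ∑ kG : Fin K, ∑ kH : Fin K, g ε (H kG) (H kH))
    (ustar : ℕ → ℝ → ℝ → ℝ → ℝ)
    (hterm : ∀ ε γG γH, ustar N ε γG γH =
      if CH / γH ≤ min (ε / τ) pHmax then
        min ((1 - (0 : ℝ)) * ccost γG) ((1 - (1 : ℝ)) * ccost γG)
      else (1 - (0 : ℝ)) * ccost γG)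
    (hbell : ∀ i, 1 ≤ i → i < N → ∀ ε γG γH, ustar i ε γG γH =
      if CH / γH ≤ min (ε / τ) pHmax then
        min ((1 - (0 : ℝ)) * ccost γG + ((K : ℝ) ^ 2)⁻¹ *
              ∫ e, uhat (ustar (i + 1)) (Quant (ε - 0 * (CH / γH) * τ + e)) ∂μ)
            ((1 - (1 : ℝ)) * ccost γG + ((K : ℝ) ^ 2)⁻¹ *
              ∫ e, uhat (ustar (i + 1)) (Quant (ε - 1 * (CH / γH) * τ + e)) ∂μ)
      else (1 - (0 : ℝ)) * ccost γG + ((K : ℝ) ^ 2)⁻¹ *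
              ∫ e, uhat (ustar (i + 1)) (Quant (ε - 0 * (CH / γH) * τ + e)) ∂μ)
    (Qi : ℕ → ℝ → ℝ → ℝ → ℝ → ℝ)
    (hQi : ∀ i, 1 ≤ i → i ≤ N → ∀ ε γG γH a, Qi i ε γG γH a =
      if i = N then (1 - a) * ccost γG
      else (1 - a) * ccost γG + ((K : ℝ) ^ 2)⁻¹ *
            ∫ e, uhat (ustar (i + 1)) (Quant (ε - a * (CH / γH) * τ + e)) ∂μ)
    :
    ∀ i, 1 ≤ i → i ≤ N → ∀ ε ∈ Egrid, ∀ γG ∈ Set.range H, ∀ γH ∈ Set.range H,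
      (¬ (CH / γH ≤ min (ε / τ) pHmax) ∨ Qi i ε γG γH 0 < Qi i ε γG γH 1) →
      ∀ γH' ∈ Set.range H, γH' ≤ γH →
        ustar i ε γG γH' = ustar i ε γG γH := by
  have hpos : ∀ γ ∈ Set.range H, 0 < γ := by rintro _ ⟨k, rfl⟩; exact hHpos k
  have hM0 : (0:ℝ) < (M:ℝ) := by exact_mod_cast hM
  have hK2 : (0:ℝ) ≤ ((K : ℝ) ^ 2)⁻¹ := by positivity
  have hcc : ∀ γ, 0 < γ → 0 ≤ ccost γ := by
    intro γ hγ; rw [hccost]; split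
    · exact hwD.le
    · positivity
  -- Quant is monotone
  have hQmono : Monotone Quant := by
    intro x y hxy
    rw [hQuant, hQuant]
    have hmin : min x B ≤ min y B := min_le_min hxy le_rfl
    have h2 : ⌊(M:ℝ) * min x B / B⌋ ≤ ⌊(M:ℝ) * min y B / B⌋ := by
      apply Int.floor_le_floor
      gcongr
    have h3 : (2 * min (⌊(M:ℝ) * min x B / B⌋ + 1) (M:ℤ) - 1 : ℤ) ≤
        2 * min (⌊(M:ℝ) * min y B / B⌋ + 1) (M:ℤ) - 1 := by omega
    have h4 : ((2 * min (⌊(M:ℝ) * min x B / B⌋ + 1) (M:ℤ) - 1 : ℤ) : ℝ) ≤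
        ((2 * min (⌊(M:ℝ) * min y B / B⌋ + 1) (M:ℤ) - 1 : ℤ) : ℝ) := by exact_mod_cast h3
    gcongr
  -- Quant is bounded above
  have htop : ∀ x, Quant x ≤ (2*(M:ℝ) - 1) * B / (2*M) := by
    intro x
    rw [hQuant]
    have h1 : (2 * min (⌊(M:ℝ) * min x B / B⌋ + 1) (M:ℤ) - 1 : ℤ) ≤ 2*(M:ℤ) - 1 := by
      have := min_le_right (⌊(M:ℝ) * min x B / B⌋ + 1) (M:ℤ); omega
    have h2 : ((2 * min (⌊(M:ℝ) * min x B / B⌋ + 1) (M:ℤ) - 1 : ℤ) : ℝ) ≤ 2*(M:ℝ) - 1 := by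
      exact_mod_cast h1
    gcongr
  -- harvested energy is a.e. nonnegative
  have hae : ∀ᵐ e ∂μ, (0:ℝ) ≤ e := by
    rw [ae_iff]
    have : {e : ℝ | ¬ (0:ℝ) ≤ e} = Set.Iio 0 := by ext e; simp [not_le]
    rw [this]; exact hμ
  -- monotonicity package: from antitonicity of ustar j we get monotone comparison of integrals
  have MONOPKG : ∀ j : ℕ,
      (∀ kG kH : Fin K, ∀ x y : ℝ, x ≤ y →
        ustar j y (H kG) (H kH) ≤ ustar j x (H kG) (H kH)) →
      (∀ c0 c0' : ℝ, c0' ≤ c0 →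
        (∫ e, uhat (ustar j) (Quant (c0 + e)) ∂μ) ≤
        ∫ e, uhat (ustar j) (Quant (c0' + e)) ∂μ) := by
    intro j hA
    have uAnt : Antitone (uhat (ustar j)) := by
      intro a b hab
      rw [huhat, huhat]
      exact Finset.sum_le_sum fun kG _ => Finset.sum_le_sum fun kH _ => hA kG kH a b hab
    have gAnt : Antitone fun x => uhat (ustar j) (Quant x) := fun a b hab => uAnt (hQmono hab)
    have hint : ∀ c0 : ℝ, Integrable (fun e => uhat (ustar j) (Quant (c0 + e))) μ := by
      intro c0
      have hanti : Antitone fun e => uhat (ustar j) (Quant (c0 + e)) :=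
        fun a b hab => gAnt (by linarith)
      refine ⟨hanti.measurable.aestronglyMeasurable, ?_⟩
      apply HasFiniteIntegral.of_bounded
        (C := max |uhat (ustar j) ((2*(M:ℝ) - 1) * B / (2*M))| |uhat (ustar j) (Quant c0)|)
      filter_upwards [hae] with e he
      have hub : uhat (ustar j) (Quant (c0 + e)) ≤ uhat (ustar j) (Quant c0) :=
        gAnt (by linarith)
      have hlb : uhat (ustar j) ((2*(M:ℝ) - 1) * B / (2*M)) ≤ uhat (ustar j) (Quant (c0 + e)) :=
        uAnt (htop _)
      rw [Real.norm_eq_abs]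
      exact abs_le_max_abs_abs hlb hub
    intro c0 c0' hcc'
    exact integral_mono (hint c0) (hint c0') fun e => gAnt (by linarith)
  -- antitonicity of the value function in the battery level
  have ANT : ∀ j, 1 ≤ j → j ≤ N → ∀ kG kH : Fin K, ∀ x y : ℝ, x ≤ y →
      ustar j y (H kG) (H kH) ≤ ustar j x (H kG) (H kH) := by
    have hcondmono : ∀ (kH : Fin K) (x y : ℝ), x ≤ y →
        CH / H kH ≤ min (x / τ) pHmax → CH / H kH ≤ min (y / τ) pHmax := by
      intro kH x y hxy h
      refine h.trans (min_le_min ?_ le_rfl)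
      gcongr
    have hTermAnt : ∀ kG kH : Fin K, ∀ x y : ℝ, x ≤ y →
        ustar N y (H kG) (H kH) ≤ ustar N x (H kG) (H kH) := by
      intro kG kH x y hxy
      rw [hterm, hterm]
      have hc := hcc (H kG) (hHpos kG)
      split_ifs with hy hx hx
      · exact le_rfl
      · exact (min_le_left _ _).trans (by norm_num)
      · exact absurd (hcondmono kH x y hxy hx) hy
      · exact le_rfl
    have key : ∀ d j, 1 ≤ j → j ≤ N → N - j ≤ d → ∀ kG kH : Fin K, ∀ x y : ℝ, x ≤ y →
        ustar j y (H kG) (H kH) ≤ ustar j x (H kG) (H kH) := by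
      intro d
      induction d with
      | zero =>
        intro j h1 h2 h3
        have : j = N := by omega
        subst this
        exact hTermAnt
      | succ d ih =>
        intro j h1 h2 h3 kG kH x y hxy
        by_cases hjN : j = N
        · subst hjN; exact hTermAnt kG kH x y hxy
        · have hlt : j < N := lt_of_le_of_ne h2 hjN
          have imono := MONOPKG (j+1) (fun kG' kH' => ih (j+1) (by omega) (by omega) (by omega) kG' kH')
          rw [hbell j h1 hlt x, hbell j h1 hlt y]
          have hI0 : (∫ e, uhat (ustar (j+1)) (Quant (y - 0 * (CH / H kH) * τ + e)) ∂μ) ≤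
              ∫ e, uhat (ustar (j+1)) (Quant (x - 0 * (CH / H kH) * τ + e)) ∂μ :=
            imono _ _ (by linarith)
          have hI1 : (∫ e, uhat (ustar (j+1)) (Quant (y - 1 * (CH / H kH) * τ + e)) ∂μ) ≤
              ∫ e, uhat (ustar (j+1)) (Quant (x - 1 * (CH / H kH) * τ + e)) ∂μ :=
            imono _ _ (by linarith)
          have hI0' := mul_le_mul_of_nonneg_left hI0 hK2
          have hI1' := mul_le_mul_of_nonneg_left hI1 hK2
          split_ifs with hy hx hx
          · exact min_le_min (by linarith) (by linarith)
          · exact (min_le_left _ _).trans (by linarith)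
          · exact absurd (hcondmono kH x y hxy hx) hy
          · linarith
    intro j h1 h2
    exact key (N - j) j h1 h2 le_rfl
  -- main proof
  intro i h1 hiN ε hε γG hγG γH hγH hyp γH' hγH' hle
  have hγGpos := hpos _ hγG
  have hγHpos := hpos _ hγH
  have hγH'pos := hpos _ hγH'
  have hdiv : CH / γH ≤ CH / γH' := by
    rw [div_le_div_iff₀ hγHpos hγH'pos]
    exact mul_le_mul_of_nonneg_left hle hCH.le
  rcases eq_or_lt_of_le hiN with rfl | hlt
  · -- terminal stage: action 1 must be disallowed
    have hQ0 : Qi i ε γG γH 0 = ccost γG := by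
      rw [hQi i h1 le_rfl]; simp
    have hQ1 : Qi i ε γG γH 1 = 0 := by
      rw [hQi i h1 le_rfl]; simp
    have hyp' : ¬ (CH / γH ≤ min (ε / τ) pHmax) := by
      rcases hyp with h | h
      · exact h
      · rw [hQ0, hQ1] at h
        exact absurd h (not_lt.2 (hcc γG hγGpos))
    have hcond' : ¬ (CH / γH' ≤ min (ε / τ) pHmax) := fun h => hyp' (hdiv.trans h)
    rw [hterm, hterm, if_neg hcond', if_neg hyp']
  · -- nonterminal stage
    rw [hbell i h1 hlt ε γG γH', hbell i h1 hlt ε γG γH]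
    simp only [zero_mul, sub_zero]
    by_cases hcγH : CH / γH ≤ min (ε / τ) pHmax
    · have hQlt : Qi i ε γG γH 0 < Qi i ε γG γH 1 :=
        hyp.resolve_left (not_not_intro hcγH)
      rw [hQi i h1 hiN ε γG γH 0, hQi i h1 hiN ε γG γH 1,
        if_neg (Nat.ne_of_lt hlt), if_neg (Nat.ne_of_lt hlt)] at hQlt
      simp only [zero_mul, sub_zero] at hQlt
      have imono := MONOPKG (i+1) (fun kG' kH' => ANT (i+1) (by omega) (by omega) kG' kH')
      have hI1 : (∫ e, uhat (ustar (i+1)) (Quant (ε - 1 * (CH / γH) * τ + e)) ∂μ) ≤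
          ∫ e, uhat (ustar (i+1)) (Quant (ε - 1 * (CH / γH') * τ + e)) ∂μ := by
        apply imono
        have : 1 * (CH / γH) * τ ≤ 1 * (CH / γH') * τ := by
          rw [one_mul, one_mul]
          exact mul_le_mul_of_nonneg_right hdiv hτ.le
        linarith
      have hI1' := mul_le_mul_of_nonneg_left hI1 hK2
      rw [if_pos hcγH]
      by_cases hcγH' : CH / γH' ≤ min (ε / τ) pHmax
      · rw [if_pos hcγH']
        rw [min_eq_left hQlt.le, min_eq_left (by linarith)]
      · rw [if_neg hcγH', min_eq_left hQlt.le]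
    · have hcγH' : ¬ (CH / γH' ≤ min (ε / τ) pHmax) := fun h => hcγH (hdiv.trans h)
      rw [if_neg hcγH, if_neg hcγH']
end

section
/- In the finite-horizon MDP defined in the context, define the action-value Q_i(s,a) = c(s,a) + K^{−2}·∫ û*_{i+1}(Q(ε − a·p_H^inv(γ_H)·τ + e)) dμ(e) for 1 ≤ i < N and Q_N(s,a) = c(s,a). Fix i ∈ {1,…,N} and a state s = (ε, γ_G, γ_H) with p_H^inv(γ_H) ≤ min(ε/τ, p_H^max) and Q_i(s,1) ≤ Q_i(s,0). Then for all channel states γ_G' ≤ γ_G and γ_H' ≥ γ_H, the state s' = (ε, γ_G', γ_H') satisfies p_H^inv(γ_H') ≤ min(ε/τ, p_H^max) and Q_i(s',1) ≤ Q_i(s',0). -/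
/-!
By backward induction every optimal cost-to-go `u*_j` is antitone in the stored energy: the
quantizer is monotone and bounded, the harvested energy is nonnegative, and the feasibility
constraint only relaxes as energy grows. So the continuation value `W` is antitone, and
`Q_i(s, a) = (1 - a) c(γ_G) + W(ε - a p_H^inv(γ_H) τ)`. A better H-channel lowers the energy
spent by serving, which can only decrease `Q_i(s, 1)`; a worse G-channel raises the cost
`c(γ_G)` of not serving, which can only increase `Q_i(s, 0)`.
-/

open MeasureTheory Set

theorem Antitone.integrable_of_ae_nonneg {μ : Measure ℝ} [IsFiniteMeasure μ]
    (hμ : μ (Iio 0) = 0) {f : ℝ → ℝ} (hf : Antitone f) (hbdd : BddBelow (range f)) :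
    Integrable f μ := by
  obtain ⟨m, hm⟩ := hbdd
  refine Integrable.of_bound hf.measurable.aestronglyMeasurable (max |m| |f 0|) ?_
  filter_upwards [measure_eq_zero_iff_ae_notMem.mp hμ] with e he
  exact abs_le_max_abs_abs (hm (mem_range_self e)) (hf (not_lt.mp he))

theorem Antitone.integral_comp_add {μ : Measure ℝ} [IsFiniteMeasure μ]
    (hμ : μ (Iio 0) = 0) {f : ℝ → ℝ} (hf : Antitone f) (hbdd : BddBelow (range f)) :
    Antitone fun x => ∫ e, f (x + e) ∂μ := by
  have hint (x : ℝ) : Integrable (fun e => f (x + e)) μ :=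
    Antitone.integrable_of_ae_nonneg hμ (hf.comp_monotone fun _ _ h => by simpa using h)
      (hbdd.mono (range_comp_subset_range (x + ·) f))
  intro x y hxy
  exact integral_mono (hint y) (hint x) fun e => hf (by simpa using hxy)

theorem Antitone.integral_comp_quantizer_add {μ : Measure ℝ} [IsFiniteMeasure μ]
    (hμ : μ (Iio 0) = 0) {F Q : ℝ → ℝ} (hF : Antitone F) (hQ : Monotone Q)
    (hQbdd : BddAbove (range Q)) :
    Antitone fun x => ∫ e, F (Q (x + e)) ∂μ :=
  Antitone.integral_comp_add (f := F ∘ Q) hμ (hF.comp_monotone hQ)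
    (by rw [range_comp]; exact hF.map_bddAbove hQbdd)

theorem Antitone.ite_min {P : ℝ → Prop} [DecidablePred P] (hP : Monotone P) {f g : ℝ → ℝ}
    (hf : Antitone f) (hg : Antitone g) :
    Antitone fun x => if P x then min (f x) (g x) else f x := by
  intro x y hxy
  dsimp only
  by_cases hy : P y
  · by_cases hx : P x
    · rw [if_pos hy, if_pos hx]; exact min_le_min (hf hxy) (hg hxy)
    · rw [if_pos hy, if_neg hx]; exact (min_le_left _ _).trans (hf hxy)
  · rw [if_neg hy, if_neg (fun hx => hy (hP hxy hx))]; exact hf hxy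

theorem monotone_le_min_div {τ : ℝ} (hτ : 0 ≤ τ) (c p : ℝ) :
    Monotone fun ε : ℝ => c ≤ min (ε / τ) p := fun _ _ h hc =>
  hc.trans (min_le_min (div_le_div_of_nonneg_right h hτ) le_rfl)

noncomputable def gridQuantizer (M : ℕ) (B x : ℝ) : ℝ :=
  ((2 * min (⌊(M : ℝ) * min x B / B⌋ + 1) (M : ℤ) - 1 : ℤ) : ℝ) * B / (2 * M)

theorem gridQuantizer_monotone {M : ℕ} {B : ℝ} (hB : 0 ≤ B) : Monotone (gridQuantizer M B) := by
  intro x y hxy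
  have hfloor : ⌊(M : ℝ) * min x B / B⌋ ≤ ⌊(M : ℝ) * min y B / B⌋ := by gcongr
  unfold gridQuantizer
  gcongr

theorem bddAbove_range_gridQuantizer {M : ℕ} {B : ℝ} (hB : 0 ≤ B) :
    BddAbove (range (gridQuantizer M B)) := by
  refine ⟨gridQuantizer M B B, forall_mem_range.2 fun x => ?_⟩
  have hcap : gridQuantizer M B x = gridQuantizer M B (min x B) := by
    simp only [gridQuantizer, min_eq_left (min_le_right x B)]
  rw [hcap]
  exact gridQuantizer_monotone hB (min_le_right x B)

theorem antitoneOn_truncInverseCost {CG κ w wD : ℝ} (hCG : 0 ≤ CG) (hw : 0 < w)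
    (hκ : κ ≤ wD / w) :
    AntitoneOn (fun γ : ℝ => if κ < CG / γ then wD else w * (CG / γ)) (Ioi 0) := by
  intro γ' hγ' γ _ hle
  have hdiv : CG / γ ≤ CG / γ' := div_le_div_of_nonneg_left hCG hγ' hle
  dsimp only
  split_ifs with h h'
  · exact le_rfl
  · exact absurd (h.trans_le hdiv) h'
  · calc w * (CG / γ) ≤ w * (wD / w) :=
          mul_le_mul_of_nonneg_left ((not_lt.mp h).trans hκ) hw.le
      _ = wD := mul_div_cancel₀ wD hw.ne'
  · gcongr

section BellmanRecursion

variable {N K : ℕ} {τ CH pHmax : ℝ} {H : Fin K → ℝ} {μ : Measure ℝ} [IsFiniteMeasure μ]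
  {Quant ccost : ℝ → ℝ} {uhat : (ℝ → ℝ → ℝ → ℝ) → ℝ → ℝ} {ustar : ℕ → ℝ → ℝ → ℝ → ℝ}

theorem antitone_channelSum
    (huhat : ∀ g ε, uhat g ε = ∑ kG : Fin K, ∑ kH : Fin K, g ε (H kG) (H kH))
    {g : ℝ → ℝ → ℝ → ℝ} (hg : ∀ γG γH, Antitone fun ε => g ε γG γH) : Antitone (uhat g) := by
  intro x y hxy
  rw [huhat, huhat]
  exact Finset.sum_le_sum fun kG _ => Finset.sum_le_sum fun kH _ => hg _ _ hxy

theorem antitone_optimalCostToGo (hτ : 0 ≤ τ) (hμ : μ (Iio 0) = 0) (hQ : Monotone Quant)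
    (hQbdd : BddAbove (range Quant))
    (huhat : ∀ g ε, uhat g ε = ∑ kG : Fin K, ∑ kH : Fin K, g ε (H kG) (H kH))
    (hterm : ∀ ε γG γH, ustar N ε γG γH =
      if CH / γH ≤ min (ε / τ) pHmax then
        min ((1 - (0 : ℝ)) * ccost γG) ((1 - (1 : ℝ)) * ccost γG)
      else (1 - (0 : ℝ)) * ccost γG)
    (hbell : ∀ i, 1 ≤ i → i < N → ∀ ε γG γH, ustar i ε γG γH =
      if CH / γH ≤ min (ε / τ) pHmax then
        min ((1 - (0 : ℝ)) * ccost γG + ((K : ℝ) ^ 2)⁻¹ *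
              ∫ e, uhat (ustar (i + 1)) (Quant (ε - 0 * (CH / γH) * τ + e)) ∂μ)
            ((1 - (1 : ℝ)) * ccost γG + ((K : ℝ) ^ 2)⁻¹ *
              ∫ e, uhat (ustar (i + 1)) (Quant (ε - 1 * (CH / γH) * τ + e)) ∂μ)
      else (1 - (0 : ℝ)) * ccost γG + ((K : ℝ) ^ 2)⁻¹ *
              ∫ e, uhat (ustar (i + 1)) (Quant (ε - 0 * (CH / γH) * τ + e)) ∂μ)
    {j : ℕ} (hj : 1 ≤ j) (hjN : j ≤ N) (γG γH : ℝ) :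
    Antitone fun ε => ustar j ε γG γH := by
  induction hjN using Nat.decreasingInduction generalizing γG γH with
  | self =>
    simp only [hterm]
    exact Antitone.ite_min (monotone_le_min_div hτ _ _) antitone_const antitone_const
  | of_succ k hkN ih =>
    have hcont : Antitone fun x => ((K : ℝ) ^ 2)⁻¹ *
        ∫ e, uhat (ustar (k + 1)) (Quant (x + e)) ∂μ :=
      ((antitone_channelSum huhat (ih (by omega))).integral_comp_quantizer_add hμ hQ
        hQbdd).const_mul (by positivity)
    have hshift (a : ℝ) : Antitone fun ε => (1 - a) * ccost γG + ((K : ℝ) ^ 2)⁻¹ *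
        ∫ e, uhat (ustar (k + 1)) (Quant (ε - a * (CH / γH) * τ + e)) ∂μ :=
      (hcont.comp_monotone fun _ _ h => sub_le_sub_right h _).const_add _
    simp only [hbell k hj hkN]
    exact Antitone.ite_min (monotone_le_min_div hτ _ _) (hshift 0) (hshift 1)

end BellmanRecursion

theorem stmt15_general
    (N M K : ℕ)
    (B τ wG wD CG CH pGmax pHmax : ℝ)
    (hB : 0 < B) (hτ : 0 < τ) (hwG : 0 < wG)
    (hCG : 0 < CG) (hCH : 0 < CH)
    (κ : ℝ) (hκ : κ = min pGmax (wD / (wG * τ)))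
    (H : Fin K → ℝ) (hHpos : ∀ k, 0 < H k)
    (μ : Measure ℝ) [IsProbabilityMeasure μ] (hμ : μ (Set.Iio 0) = 0)
    (Quant : ℝ → ℝ)
    (hQuant : ∀ x, Quant x =
      ((2 * min (⌊(M : ℝ) * min x B / B⌋ + 1) (M : ℤ) - 1 : ℤ) : ℝ) * B / (2 * M))
    (Egrid : Set ℝ)
    (ccost : ℝ → ℝ)
    (hccost : ∀ γ, ccost γ = if κ < CG / γ then wD else wG * τ * (CG / γ))
    (uhat : (ℝ → ℝ → ℝ → ℝ) → ℝ → ℝ)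
    (huhat : ∀ g ε, uhat g ε = ∑ kG : Fin K, ∑ kH : Fin K, g ε (H kG) (H kH))
    (ustar : ℕ → ℝ → ℝ → ℝ → ℝ)
    (hterm : ∀ ε γG γH, ustar N ε γG γH =
      if CH / γH ≤ min (ε / τ) pHmax then
        min ((1 - (0 : ℝ)) * ccost γG) ((1 - (1 : ℝ)) * ccost γG)
      else (1 - (0 : ℝ)) * ccost γG)
    (hbell : ∀ i, 1 ≤ i → i < N → ∀ ε γG γH, ustar i ε γG γH =
      if CH / γH ≤ min (ε / τ) pHmax then
        min ((1 - (0 : ℝ)) * ccost γG + ((K : ℝ) ^ 2)⁻¹ *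
              ∫ e, uhat (ustar (i + 1)) (Quant (ε - 0 * (CH / γH) * τ + e)) ∂μ)
            ((1 - (1 : ℝ)) * ccost γG + ((K : ℝ) ^ 2)⁻¹ *
              ∫ e, uhat (ustar (i + 1)) (Quant (ε - 1 * (CH / γH) * τ + e)) ∂μ)
      else (1 - (0 : ℝ)) * ccost γG + ((K : ℝ) ^ 2)⁻¹ *
              ∫ e, uhat (ustar (i + 1)) (Quant (ε - 0 * (CH / γH) * τ + e)) ∂μ)
    (Qi : ℕ → ℝ → ℝ → ℝ → ℝ → ℝ)
    (hQi : ∀ i, 1 ≤ i → i ≤ N → ∀ ε γG γH a, Qi i ε γG γH a =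
      if i = N then (1 - a) * ccost γG
      else (1 - a) * ccost γG + ((K : ℝ) ^ 2)⁻¹ *
            ∫ e, uhat (ustar (i + 1)) (Quant (ε - a * (CH / γH) * τ + e)) ∂μ)
    :
    ∀ i, 1 ≤ i → i ≤ N → ∀ ε ∈ Egrid, ∀ γG ∈ Set.range H, ∀ γH ∈ Set.range H,
      CH / γH ≤ min (ε / τ) pHmax →
      Qi i ε γG γH 1 ≤ Qi i ε γG γH 0 →
      ∀ γG' ∈ Set.range H, ∀ γH' ∈ Set.range H, γG' ≤ γG → γH ≤ γH' →
        (CH / γH' ≤ min (ε / τ) pHmax ∧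
          Qi i ε γG' γH' 1 ≤ Qi i ε γG' γH' 0) := by
  rintro i hi hiN ε - _ ⟨kG, rfl⟩ _ ⟨kH, rfl⟩ hfeas hopt _ ⟨kG', rfl⟩ _ ⟨kH', rfl⟩ hG hH
  have hpower : CH / H kH' ≤ CH / H kH := div_le_div_of_nonneg_left hCH.le (hHpos kH) hH
  refine ⟨hpower.trans hfeas, ?_⟩
  obtain rfl : Quant = gridQuantizer M B := funext hQuant
  set W : ℝ → ℝ := fun x => if i = N then 0 else
    ((K : ℝ) ^ 2)⁻¹ * ∫ e, uhat (ustar (i + 1)) (gridQuantizer M B (x + e)) ∂μ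
  have hQW (γG γH a : ℝ) : Qi i ε γG γH a = (1 - a) * ccost γG + W (ε - a * (CH / γH) * τ) := by
    rw [hQi i hi hiN]
    split_ifs with h <;> simp [W, h]
  have hW : Antitone W := by
    by_cases h : i = N
    · simpa only [W, if_pos h] using antitone_const
    · have hQ := gridQuantizer_monotone (M := M) hB.le
      have hQbdd := bddAbove_range_gridQuantizer (M := M) hB.le
      simp only [W, if_neg h]
      exact ((antitone_channelSum huhat fun _ _ =>
        antitone_optimalCostToGo hτ.le hμ hQ hQbdd huhat hterm hbell (by omega) (by omega) _ _
          ).integral_comp_quantizer_add hμ hQ hQbdd).const_mul (by positivity)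
  have hcost : ccost (H kG) ≤ ccost (H kG') := by
    rw [hccost, hccost]
    exact antitoneOn_truncInverseCost hCG.le (mul_pos hwG hτ) (hκ ▸ min_le_right _ _)
      (hHpos kG') (hHpos kG) hG
  simp only [hQW, sub_self, sub_zero, zero_mul, one_mul, zero_add] at hopt ⊢
  calc W (ε - CH / H kH' * τ) ≤ W (ε - CH / H kH * τ) := hW (by gcongr)
    _ ≤ ccost (H kG) + W ε := hopt
    _ ≤ ccost (H kG') + W ε := by gcongr

/-- Combined monotone-structure corollary of Propositions 2 and 3 (justifying the monotone
backward induction algorithm): if serving with the EH-BS is allowed and optimal at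
`(ε, γG, γH)`, it remains allowed and optimal at any state `(ε, γG', γH')` with a worse
G-channel `γG' ≤ γG` and a better H-channel `γH' ≥ γH`. -/
theorem stmt15
    (N M K : ℕ) (hN : 1 ≤ N) (hM : 1 ≤ M) (hK : 1 ≤ K)
    (B τ wG wD CG CH pGmax pHmax : ℝ)
    (hB : 0 < B) (hτ : 0 < τ) (hwG : 0 < wG) (hwD : 0 < wD)
    (hCG : 0 < CG) (hCH : 0 < CH) (hpGmax : 0 < pGmax) (hpHmax : 0 < pHmax)
    (κ : ℝ) (hκ : κ = min pGmax (wD / (wG * τ)))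
    (H : Fin K → ℝ) (hHpos : ∀ k, 0 < H k) (hHmono : StrictMono H)
    (μ : Measure ℝ) [IsProbabilityMeasure μ] (hμ : μ (Set.Iio 0) = 0)
    (Quant : ℝ → ℝ)
    (hQuant : ∀ x, Quant x =
      ((2 * min (⌊(M : ℝ) * min x B / B⌋ + 1) (M : ℤ) - 1 : ℤ) : ℝ) * B / (2 * M))
    (Egrid : Set ℝ)
    (hEgrid : Egrid = {x : ℝ | ∃ m : ℕ, 1 ≤ m ∧ m ≤ M ∧ x = (2 * (m : ℝ) - 1) * B / (2 * M)})
    (ccost : ℝ → ℝ)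
    (hccost : ∀ γ, ccost γ = if κ < CG / γ then wD else wG * τ * (CG / γ))
    (uhat : (ℝ → ℝ → ℝ → ℝ) → ℝ → ℝ)
    (huhat : ∀ g ε, uhat g ε = ∑ kG : Fin K, ∑ kH : Fin K, g ε (H kG) (H kH))
    (ustar : ℕ → ℝ → ℝ → ℝ → ℝ)
    (hterm : ∀ ε γG γH, ustar N ε γG γH =
      if CH / γH ≤ min (ε / τ) pHmax then
        min ((1 - (0 : ℝ)) * ccost γG) ((1 - (1 : ℝ)) * ccost γG)
      else (1 - (0 : ℝ)) * ccost γG)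
    (hbell : ∀ i, 1 ≤ i → i < N → ∀ ε γG γH, ustar i ε γG γH =
      if CH / γH ≤ min (ε / τ) pHmax then
        min ((1 - (0 : ℝ)) * ccost γG + ((K : ℝ) ^ 2)⁻¹ *
              ∫ e, uhat (ustar (i + 1)) (Quant (ε - 0 * (CH / γH) * τ + e)) ∂μ)
            ((1 - (1 : ℝ)) * ccost γG + ((K : ℝ) ^ 2)⁻¹ *
              ∫ e, uhat (ustar (i + 1)) (Quant (ε - 1 * (CH / γH) * τ + e)) ∂μ)
      else (1 - (0 : ℝ)) * ccost γG + ((K : ℝ) ^ 2)⁻¹ *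
              ∫ e, uhat (ustar (i + 1)) (Quant (ε - 0 * (CH / γH) * τ + e)) ∂μ)
    (Qi : ℕ → ℝ → ℝ → ℝ → ℝ → ℝ)
    (hQi : ∀ i, 1 ≤ i → i ≤ N → ∀ ε γG γH a, Qi i ε γG γH a =
      if i = N then (1 - a) * ccost γG
      else (1 - a) * ccost γG + ((K : ℝ) ^ 2)⁻¹ *
            ∫ e, uhat (ustar (i + 1)) (Quant (ε - a * (CH / γH) * τ + e)) ∂μ)
    :
    ∀ i, 1 ≤ i → i ≤ N → ∀ ε ∈ Egrid, ∀ γG ∈ Set.range H, ∀ γH ∈ Set.range H,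
      CH / γH ≤ min (ε / τ) pHmax →
      Qi i ε γG γH 1 ≤ Qi i ε γG γH 0 →
      ∀ γG' ∈ Set.range H, ∀ γH' ∈ Set.range H, γG' ≤ γG → γH ≤ γH' →
        (CH / γH' ≤ min (ε / τ) pHmax ∧
          Qi i ε γG' γH' 1 ≤ Qi i ε γG' γH' 0) :=
  stmt15_general N M K B τ wG wD CG CH pGmax pHmax hB hτ hwG hCG hCH κ hκ H hHpos μ hμ Quant hQuant
    Egrid ccost hccost uhat huhat ustar hterm hbell Qi hQi
end

section
/- Let λ > 0, C > 0, κ > 0, w_G > 0, w_D > 0, τ > 0, and set A = λ·C and E₁(x) = ∫_x^∞ e^{−t}/t dt for x > 0. Then ∫_0^∞ [ w_D·𝟙{C/x > κ} + w_G·τ·(C/x)·𝟙{C/x ≤ κ} ]·λ·e^{−λx} dx = w_D·(1 − e^{−A/κ}) + w_G·τ·A·E₁(A/κ). -/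
/-!
The cost is `wD` for gains `x < C / κ` and `wG τ C / x` for `x > C / κ`, so the expectation
splits at `C / κ`. The first piece is the exponential distribution function at `C / κ`; the
second becomes `λ C E₁(λ C / κ)` under the substitution `t = λ x`. Both pieces are integrable
because the cost is bounded by `|w_D| + |w_G τ| κ` on `(0, ∞)`.
-/

open Real Set MeasureTheory

/-- The cost `c` of a block as a function of the inversion power `p = C / γ`. -/
noncomputable def blockCost (wD wG τ κ p : ℝ) : ℝ :=
  wD * (if κ < p then 1 else 0) + wG * τ * p * (if p ≤ κ then 1 else 0)

section blockCost

variable {wD wG τ κ p : ℝ}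

lemma blockCost_of_lt (h : κ < p) : blockCost wD wG τ κ p = wD := by
  simp [blockCost, h, not_le.mpr h]

lemma blockCost_of_le (h : p ≤ κ) : blockCost wD wG τ κ p = wG * τ * p := by
  simp [blockCost, h, not_lt.mpr h]

lemma abs_blockCost_le (hp : 0 ≤ p) : |blockCost wD wG τ κ p| ≤ |wD| + |wG * τ| * |κ| := by
  rcases lt_or_ge κ p with h | h
  · rw [blockCost_of_lt h]
    nlinarith [abs_nonneg (wG * τ), abs_nonneg κ]
  · rw [blockCost_of_le h, abs_mul, abs_of_nonneg hp]
    nlinarith [abs_nonneg wD, abs_nonneg (wG * τ), le_abs_self κ]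

lemma measurable_blockCost : Measurable (blockCost wD wG τ κ) := by
  unfold blockCost
  exact (measurable_const.mul (measurable_const.ite measurableSet_Ioi measurable_const)).add
    ((measurable_const.mul measurable_id).mul
      (measurable_const.ite measurableSet_Iic measurable_const))

end blockCost

lemma integral_Ioc_exponential_density (lam : ℝ) {a : ℝ} (ha : 0 ≤ a) :
    ∫ x in Ioc 0 a, lam * exp (-lam * x) = 1 - exp (-lam * a) := by
  have hderiv : ∀ x ∈ uIcc 0 a,
      HasDerivAt (fun y => -exp (-lam * y)) (lam * exp (-lam * x)) x := fun x _ =>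
    ((hasDerivAt_id x).const_mul (-lam)).exp.neg.congr_deriv (by simp only [id]; ring)
  rw [← intervalIntegral.integral_of_le ha,
    intervalIntegral.integral_eq_sub_of_hasDerivAt hderiv
    (Continuous.intervalIntegrable (by fun_prop) _ _)]
  simp only [neg_mul, mul_zero, exp_zero]
  ring

/-- The substitution `t = lam * x` turns the tail integral into the exponential integral;
both integrands vanish at `x = 0`, so the identity holds pointwise on all of `ℝ`. -/
lemma setIntegral_Ioi_div_mul_exponential_density {lam : ℝ} (hlam : 0 < lam) (C a : ℝ) :
    ∫ x in Ioi a, C / x * (lam * exp (-lam * x))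
      = lam * C * ∫ t in Ioi (lam * a), exp (-t) / t := by
  have hsubst : (fun x => C / x * (lam * exp (-lam * x)))
      = fun x => (lam * C * lam) * (exp (-(lam * x)) / (lam * x)) := by
    ext x
    rcases eq_or_ne x 0 with rfl | hx
    · simp
    · field_simp
  rw [hsubst, integral_const_mul, integral_comp_mul_left_Ioi (fun t => exp (-t) / t) a hlam,
    smul_eq_mul]
  field_simp

lemma integrableOn_blockCost_mul_exponential_density (wD wG τ κ : ℝ) {lam C : ℝ}
    (hlam : 0 < lam) (hC : 0 ≤ C) :
    IntegrableOn (fun x => blockCost wD wG τ κ (C / x) * (lam * exp (-lam * x))) (Ioi 0) := by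
  refine Integrable.bdd_mul (c := |wD| + |wG * τ| * |κ|)
    ((exp_neg_integrableOn_Ioi 0 hlam).const_mul lam)
    (measurable_blockCost.comp (measurable_const.div measurable_id)).aestronglyMeasurable ?_
  filter_upwards [self_mem_ae_restrict measurableSet_Ioi] with x hx
  exact abs_blockCost_le (div_nonneg hC (le_of_lt hx))

theorem stmt17_general (lam C κ wG wD τ : ℝ)
    (hlam : 0 < lam) (hC : 0 < C) (hκ : 0 < κ)
    (A : ℝ) (hA : A = lam * C)
    (E1 : ℝ → ℝ) (hE1 : ∀ x, 0 < x → E1 x = ∫ t in Set.Ioi x, Real.exp (-t) / t) :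
    (∫ x in Set.Ioi (0 : ℝ),
        (wD * (if κ < C / x then 1 else 0)
          + wG * τ * (C / x) * (if C / x ≤ κ then 1 else 0))
        * (lam * Real.exp (-lam * x)))
      = wD * (1 - Real.exp (-A / κ)) + wG * τ * A * E1 (A / κ) := by
  change ∫ x in Ioi 0, blockCost wD wG τ κ (C / x) * (lam * exp (-lam * x)) = _
  set a := C / κ
  have ha : 0 < a := div_pos hC hκ
  have hint := integrableOn_blockCost_mul_exponential_density wD wG τ κ hlam hC.le
  have hbelow : ∀ x ∈ Ioo 0 a,
      blockCost wD wG τ κ (C / x) * (lam * exp (-lam * x)) = wD * (lam * exp (-lam * x)) :=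
    fun x hx => by rw [blockCost_of_lt ((lt_div_iff₀ hx.1).2 ((lt_div_iff₀' hκ).1 hx.2))]
  have habove : ∀ x ∈ Ioi a, blockCost wD wG τ κ (C / x) * (lam * exp (-lam * x))
      = wG * τ * (C / x * (lam * exp (-lam * x))) := fun x hx => by
    rw [blockCost_of_le ((div_le_iff₀ (ha.trans hx)).2 ((div_le_iff₀' hκ).1 hx.le)), mul_assoc]
  rw [← Ioc_union_Ioi_eq_Ioi ha.le, setIntegral_union Ioc_disjoint_Ioi_same measurableSet_Ioi
      (hint.mono_set Ioc_subset_Ioi_self) (hint.mono_set (Ioi_subset_Ioi ha.le)),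
    integral_Ioc_eq_integral_Ioo, setIntegral_congr_fun measurableSet_Ioo hbelow,
    ← integral_Ioc_eq_integral_Ioo, setIntegral_congr_fun measurableSet_Ioi habove,
    integral_const_mul wD, integral_const_mul (wG * τ), integral_Ioc_exponential_density lam ha.le,
    setIntegral_Ioi_div_mul_exponential_density hlam, hA, show lam * C / κ = lam * a by ring,
    show -(lam * C) / κ = -lam * a by ring, hE1 _ (mul_pos hlam ha)]
  ring

/-- Closed-form constant `λ₁` of the Threshold-based Heuristic policy (Section IV-B) for
Rayleigh fading: with the small-scale channel gain exponentially distributed with density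
`λ·e^{−λx}` on `(0,∞)`, inversion power `C/x`, and per-block cost `w_D` if `C/x > κ` and
`w_G·τ·(C/x)` otherwise, the expected cost equals
`w_D·(1 − e^{−A/κ}) + w_G·τ·A·E₁(A/κ)` with `A = λ·C`. -/
theorem stmt17 (lam C κ wG wD τ : ℝ)
    (hlam : 0 < lam) (hC : 0 < C) (hκ : 0 < κ) (hwG : 0 < wG) (hwD : 0 < wD) (hτ : 0 < τ)
    (A : ℝ) (hA : A = lam * C)
    (E1 : ℝ → ℝ) (hE1 : ∀ x, 0 < x → E1 x = ∫ t in Set.Ioi x, Real.exp (-t) / t) :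
    (∫ x in Set.Ioi (0 : ℝ),
        (wD * (if κ < C / x then 1 else 0)
          + wG * τ * (C / x) * (if C / x ≤ κ then 1 else 0))
        * (lam * Real.exp (-lam * x)))
      = wD * (1 - Real.exp (-A / κ)) + wG * τ * A * E1 (A / κ) :=
  stmt17_general lam C κ wG wD τ hlam hC hκ A hA E1 hE1
end
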